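/- arXiv:math/0311112 — 6 statements merged into one kernel-verified Lean document; each statement's English description precedes it below -/
import Mathlib

section
/- Let L be a finite lattice. Then every minimal prime ideal of H_L has height 2 if and only if L is distributive. -/
open MvPolynomial

def JoinIrred {L : Type*} [Preorder L] (p : L) : Prop := ¬ IsLUB {q | q < p} p

open Classical in
/-- The squarefree monomial `u_q = (∏_{p ∈ ℓ(q)} x_p)(∏_{p ∈ P∖ℓ(q)} y_p)`;
`x_p` is `X (Sum.inl p)` and `y_p` is `X (Sum.inr p)`. -/
noncomputable def uMon {L : Type*} [Preorder L] [Fintype L] (F : Type*) [Field F] (q : L) :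
    MvPolynomial ({p : L // JoinIrred p} ⊕ {p : L // JoinIrred p}) F :=
  ∏ p : {p : L // JoinIrred p},
    if (p : L) ≤ q then X (Sum.inl p) else X (Sum.inr p)



open MvPolynomial
open scoped Classical

section SpanX
variable {σ F : Type*} [Field F]

/-- The substitution killing the variables in `s`. -/
noncomputable def killHom (s : Set σ) : MvPolynomial σ F →ₐ[F] MvPolynomial σ F :=
  aeval (fun i => if i ∈ s then (0 : MvPolynomial σ F) else X i)

lemma killHom_X (s : Set σ) (i : σ) :
    killHom (F := F) s (X i) = if i ∈ s then 0 else X i := by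
  simp [killHom]

lemma sub_killHom_mem (s : Set σ) (f : MvPolynomial σ F) :
    f - killHom s f ∈ Ideal.span (X '' s : Set (MvPolynomial σ F)) := by
  induction f using MvPolynomial.induction_on with
  | C a => simp [killHom]
  | add p q hp hq =>
      have := Ideal.add_mem _ hp hq
      simpa [map_add, add_sub_add_comm] using this
  | mul_X p i hp =>
      have hXi : X i - killHom (F := F) s (X i) ∈
          Ideal.span (X '' s : Set (MvPolynomial σ F)) := by
        rw [killHom_X]
        by_cases h : i ∈ s
        · rw [if_pos h, sub_zero]
          exact Ideal.subset_span (Set.mem_image_of_mem X h)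
        · simp [h]
      have : p * X i - killHom s (p * X i)
          = (p - killHom s p) * X i + killHom s p * (X i - killHom s (X i)) := by
        rw [map_mul]; ring
      rw [this]
      exact Ideal.add_mem _ (Ideal.mul_mem_right _ _ hp) (Ideal.mul_mem_left _ _ hXi)

lemma mem_span_X_iff_kill {s : Set σ} {f : MvPolynomial σ F} :
    f ∈ Ideal.span (X '' s : Set (MvPolynomial σ F)) ↔ killHom s f = 0 := by
  constructor
  · intro hf
    have hle : Ideal.span (X '' s : Set (MvPolynomial σ F)) ≤
        RingHom.ker (killHom (F := F) s : MvPolynomial σ F →+* MvPolynomial σ F) := by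
      rw [Ideal.span_le]
      rintro _ ⟨i, hi, rfl⟩
      simp [RingHom.mem_ker, killHom_X, hi]
    simpa [RingHom.mem_ker] using hle hf
  · intro h
    have := sub_killHom_mem (F := F) s f
    rwa [h, sub_zero] at this

lemma isPrime_span_X (s : Set σ) :
    (Ideal.span (X '' s : Set (MvPolynomial σ F))).IsPrime := by
  constructor
  · intro h
    have : killHom (F := F) s 1 = 0 := mem_span_X_iff_kill.mp (h ▸ Submodule.mem_top)
    simp at this
  · intro f g hfg
    rw [mem_span_X_iff_kill] at hfg
    rw [map_mul] at hfg
    rcases mul_eq_zero.mp hfg with h | h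
    · exact Or.inl (mem_span_X_iff_kill.mpr h)
    · exact Or.inr (mem_span_X_iff_kill.mpr h)

lemma X_mem_span_X_iff {s : Set σ} {i : σ} :
    (X i : MvPolynomial σ F) ∈ Ideal.span (X '' s : Set (MvPolynomial σ F)) ↔ i ∈ s := by
  rw [mem_span_X_iff_kill, killHom_X]
  by_cases h : i ∈ s <;> simp [h, X_ne_zero]

lemma span_X_mono {s t : Set σ} (h : s ⊆ t) :
    Ideal.span (X '' s : Set (MvPolynomial σ F)) ≤ Ideal.span (X '' t) :=
  Ideal.span_mono (Set.image_mono h)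

lemma span_X_lt {s t : Set σ} (hst : s ⊆ t) {j : σ} (hj : j ∈ t) (hjs : j ∉ s) :
    Ideal.span (X '' s : Set (MvPolynomial σ F)) < Ideal.span (X '' t) := by
  refine lt_of_le_of_ne (span_X_mono hst) (fun h => hjs ?_)
  exact X_mem_span_X_iff.mp (h ▸ X_mem_span_X_iff.mpr hj)

lemma prod_X_eq_monomial {ι : Type*} (t : Finset ι) (g : ι → σ) :
    (∏ p ∈ t, (X (g p) : MvPolynomial σ F))
      = monomial (∑ p ∈ t, Finsupp.single (g p) 1) 1 := by
  classical
  induction t using Finset.induction_on with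
  | empty => simp
  | insert _ _ h ih =>
      rw [Finset.prod_insert h, ih, Finset.sum_insert h, X, monomial_mul, one_mul]

lemma monomial_mem_span_X_iff {s : Set σ} {d : σ →₀ ℕ} :
    (monomial d 1 : MvPolynomial σ F) ∈ Ideal.span (X '' s : Set (MvPolynomial σ F)) ↔
      ∃ i ∈ s, d i ≠ 0 := by
  rw [mem_ideal_span_X_image]
  constructor
  · intro h
    exact h d (by simp [support_monomial, coeff_monomial])
  · intro h m hm
    classical
    rw [support_monomial, if_neg (one_ne_zero)] at hm
    simp only [Finset.mem_singleton] at hm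
    subst hm; exact h

end SpanX


open Polynomial

section Dim2
variable {K : Type*} [Field K]

theorem no_chain4 {q0 q1 q2 q3 : Ideal (Polynomial (Polynomial K))}
    (hp1 : q1.IsPrime) (hp2 : q2.IsPrime) (hp3 : q3.IsPrime)
    (l01 : q0 < q1) (l12 : q1 < q2) (l23 : q2 < q3) : False := by
  classical
  -- `q1` is not the zero ideal
  have hq1ne : q1 ≠ ⊥ := by
    intro h
    exact not_lt_bot (h ▸ l01)
  obtain ⟨w, hwq1, hw0⟩ := (Submodule.ne_bot_iff q1).mp hq1ne
  -- a prime element `f` of `q1`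
  obtain ⟨fs, hfsp, hassoc⟩ := UniqueFactorizationMonoid.exists_prime_factors w hw0
  have hfsprod : fs.prod ∈ q1 := by
    obtain ⟨un, hun⟩ := hassoc
    have : fs.prod = w * ↑un⁻¹ := by
      rw [← hun, mul_assoc, Units.mul_inv, mul_one]
    rw [this]
    exact q1.mul_mem_right _ hwq1
  obtain ⟨f, hfmemfs, hf_mem⟩ := (hp1.multiset_prod_mem_iff_exists_mem fs).mp hfsprod
  have hf_prime : Prime f := hfsp f hfmemfs
  -- an element of `q2` not in `q1`
  obtain ⟨g, hgq2, hgq1⟩ := SetLike.exists_of_lt l12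
  have hg0 : g ≠ 0 := fun h => hgq1 (h ▸ q1.zero_mem)
  -- a nonzero element of `q2 ∩ K[x]`
  have hfd : ∃ d : Polynomial K, d ≠ 0 ∧ Polynomial.C d ∈ q2 := by
    by_cases hdeg : f.natDegree = 0
    · obtain ⟨d, rfl⟩ := natDegree_eq_zero.mp hdeg
      exact ⟨d, fun h => hf_prime.ne_zero (by rw [h, map_zero]), l12.le hf_mem⟩
    · have hf_irr : Irreducible f := hf_prime.irreducible
      have hfprim : f.IsPrimitive := by
        intro r hr
        obtain ⟨h, hfh⟩ := hr
        rcases hf_irr.isUnit_or_isUnit hfh with hu | hu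
        · exact Polynomial.isUnit_C.mp hu
        · exfalso
          obtain ⟨r', hr', hrr⟩ := Polynomial.isUnit_iff.mp hu
          apply hdeg
          rw [hfh, ← hrr, ← Polynomial.C_mul, Polynomial.natDegree_C]
      set L := FractionRing (Polynomial K)
      set φ : Polynomial K →+* L := algebraMap (Polynomial K) L with hφ
      have hinj : Function.Injective φ := IsFractionRing.injective (Polynomial K) L
      have hfb_irr : Irreducible (f.map φ) :=
        (hfprim.irreducible_iff_irreducible_map_fraction_map (K := L)).mp hf_irr
      have hnd : ¬ (f.map φ) ∣ (g.map φ) := by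
        intro hdvd
        have hcont : g.content ≠ 0 := by
          simpa [Polynomial.content_eq_zero_iff] using hg0
        have hCunit : IsUnit (Polynomial.C (φ g.content)) :=
          Polynomial.isUnit_C.mpr (isUnit_iff_ne_zero.mpr (by
            simpa [map_eq_zero_iff φ hinj] using hcont))
        obtain ⟨cu, hcu⟩ := hCunit
        have hgb : g.map φ = ↑cu * (g.primPart.map φ) := by
          conv_lhs => rw [g.eq_C_content_mul_primPart]
          rw [Polynomial.map_mul, Polynomial.map_C, hcu]
        have hdvd' : f.map φ ∣ g.primPart.map φ := by
          have : g.primPart.map φ = ↑cu⁻¹ * g.map φ := by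
            rw [hgb, ← mul_assoc, Units.inv_mul, one_mul]
          rw [this]
          exact hdvd.mul_left _
        have hfg : f ∣ g.primPart :=
          hfprim.dvd_of_fraction_map_dvd_fraction_map hdvd'
        have : f ∣ g := hfg.trans g.primPart_dvd
        obtain ⟨t, rfl⟩ := this
        exact hgq1 (q1.mul_mem_right t hf_mem)
      -- coprimality in `L[X]`
      have hco : ∃ a b : Polynomial L, (f.map φ) * a + (g.map φ) * b = 1 := by
        set dd := EuclideanDomain.gcd (f.map φ) (g.map φ) with hdd
        have hdl : dd ∣ f.map φ := EuclideanDomain.gcd_dvd_left _ _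
        have hdu : IsUnit dd := by
          obtain ⟨e, he⟩ := hdl
          rcases hfb_irr.isUnit_or_isUnit he with h | h
          · exact h
          · exfalso
            apply hnd
            obtain ⟨eu, rfl⟩ := h
            have : f.map φ ∣ dd := ⟨↑eu⁻¹, by rw [he, mul_assoc, Units.mul_inv, mul_one]⟩
            exact this.trans (EuclideanDomain.gcd_dvd_right _ _)
        obtain ⟨u, hu⟩ := hdu
        refine ⟨EuclideanDomain.gcdA (f.map φ) (g.map φ) * ↑u⁻¹,
          EuclideanDomain.gcdB (f.map φ) (g.map φ) * ↑u⁻¹, ?_⟩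
        have h := EuclideanDomain.gcd_eq_gcd_ab (f.map φ) (g.map φ)
        calc (f.map φ) * (EuclideanDomain.gcdA (f.map φ) (g.map φ) * ↑u⁻¹)
              + (g.map φ) * (EuclideanDomain.gcdB (f.map φ) (g.map φ) * ↑u⁻¹)
            = ((f.map φ) * EuclideanDomain.gcdA (f.map φ) (g.map φ)
              + (g.map φ) * EuclideanDomain.gcdB (f.map φ) (g.map φ)) * ↑u⁻¹ := by ring
          _ = dd * ↑u⁻¹ := by rw [← h]
          _ = 1 := by rw [← hu, Units.mul_inv]
      obtain ⟨a, b, hab⟩ := hco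
      obtain ⟨⟨sa, hsa⟩, ha⟩ :=
        IsLocalization.integerNormalization_map_to_map (nonZeroDivisors (Polynomial K)) a
      obtain ⟨⟨sb, hsb⟩, hb⟩ :=
        IsLocalization.integerNormalization_map_to_map (nonZeroDivisors (Polynomial K)) b
      set a0 := IsLocalization.integerNormalization (nonZeroDivisors (Polynomial K)) a with ha0
      set b0 := IsLocalization.integerNormalization (nonZeroDivisors (Polynomial K)) b with hb0
      have ha' : a0.map φ = Polynomial.C (φ sa) * a := by
        rw [ha, Algebra.smul_def,
          IsScalarTower.algebraMap_apply (Polynomial K) L (Polynomial L),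
          Polynomial.algebraMap_eq]
      have hb' : b0.map φ = Polynomial.C (φ sb) * b := by
        rw [hb, Algebra.smul_def,
          IsScalarTower.algebraMap_apply (Polynomial K) L (Polynomial L),
          Polynomial.algebraMap_eq]
      have hkey : Polynomial.C (sa * sb) =
          a0 * Polynomial.C sb * f + b0 * Polynomial.C sa * g := by
        apply Polynomial.map_injective φ hinj
        rw [Polynomial.map_add, Polynomial.map_mul, Polynomial.map_mul, Polynomial.map_mul,
          Polynomial.map_mul, ha', hb', Polynomial.map_C, Polynomial.map_C, Polynomial.map_C,
          map_mul, Polynomial.C_mul]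
        linear_combination (-(Polynomial.C (φ sa) * Polynomial.C (φ sb))) * hab
      refine ⟨sa * sb, ?_, ?_⟩
      · exact mul_ne_zero (nonZeroDivisors.ne_zero hsa) (nonZeroDivisors.ne_zero hsb)
      · rw [hkey]
        exact Ideal.add_mem _ (q2.mul_mem_left _ (l12.le hf_mem)) (q2.mul_mem_left _ hgq2)
  obtain ⟨d, hd0, hdq2⟩ := hfd
  -- the contraction of `q2` to `K[x]`
  set m : Ideal (Polynomial K) := Ideal.comap (Polynomial.C : Polynomial K →+* _) q2 with hm
  haveI hmp : m.IsPrime := Ideal.IsPrime.comap _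
  have hmne : m ≠ ⊥ := by
    intro h
    have hdm : d ∈ m := Ideal.mem_comap.mpr hdq2
    rw [h] at hdm
    exact hd0 hdm
  haveI hmmax : m.IsMaximal := IsPrime.to_maximal_ideal hmne
  letI : Field (Polynomial K ⧸ m) := Ideal.Quotient.field m
  set ρ : Polynomial (Polynomial K) →+* Polynomial (Polynomial K ⧸ m) :=
    Polynomial.mapRingHom (Ideal.Quotient.mk m) with hρ
  have hρs : Function.Surjective ρ := Polynomial.map_surjective _ Ideal.Quotient.mk_surjective
  have hker : RingHom.ker ρ = m.map (Polynomial.C : Polynomial K →+* _) := by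
    rw [hρ, Polynomial.ker_mapRingHom, Ideal.mk_ker]
  have hkerle : RingHom.ker ρ ≤ q2 := by
    rw [hker, Ideal.map_le_iff_le_comap]
  haveI hq2bar : (q2.map ρ).IsPrime := Ideal.map_isPrime_of_surjective hρs hkerle
  have hcomapmap : Ideal.comap ρ (q2.map ρ) = q2 := by
    rw [Ideal.comap_map_of_surjective ρ hρs, ← RingHom.ker_eq_comap_bot, sup_eq_left.mpr hkerle]
  by_cases hbar : q2.map ρ = ⊥
  · -- then `q2` is generated by `C u` for `u` generating `m`
    have hq2 : q2 = m.map (Polynomial.C : Polynomial K →+* _) := by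
      rw [← hker, RingHom.ker_eq_comap_bot, ← hbar]
      exact hcomapmap.symm
    obtain ⟨u, hu⟩ := IsPrincipalIdealRing.principal m
    have hq2' : q2 = Ideal.span {Polynomial.C u} := by
      rw [hq2, hu, Ideal.submodule_span_eq, Ideal.map_span, Set.image_singleton]
    have hu0 : u ≠ 0 := by
      intro h
      apply hmne
      rw [hu, h, Ideal.submodule_span_eq, Ideal.span_singleton_eq_bot]
    have huNU : ¬ IsUnit u := by
      intro h
      apply hmmax.ne_top
      rw [hu, Ideal.submodule_span_eq, Ideal.span_singleton_eq_top]
      exact h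
    have hCuq1 : Polynomial.C u ∉ q1 := by
      intro h
      have hle : q2 ≤ q1 := by
        rw [hq2']
        exact (Ideal.span_singleton_le_iff_mem _).mpr h
      exact l12.not_ge hle
    have hdiv : ∀ n : ℕ, ∃ v ∈ q1, w = Polynomial.C u ^ n * v := by
      intro n
      induction n with
      | zero => exact ⟨w, hwq1, by simp⟩
      | succ n ih =>
          obtain ⟨v, hv, hwv⟩ := ih
          have hvq2 : v ∈ q2 := l12.le hv
          rw [hq2', Ideal.mem_span_singleton] at hvq2
          obtain ⟨v', rfl⟩ := hvq2
          have hv' : v' ∈ q1 := (hp1.mem_or_mem hv).resolve_left hCuq1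
          exact ⟨v', hv', by rw [hwv]; ring⟩
    obtain ⟨k, hk⟩ : ∃ k, w.coeff k ≠ 0 := by
      by_contra hcon
      push_neg at hcon
      exact hw0 (Polynomial.ext fun n => by simp [hcon n])
    have hun : 0 < u.natDegree := by
      rcases Nat.eq_zero_or_pos u.natDegree with h | h
      swap
      · exact h
      · exfalso
        obtain ⟨c, hc⟩ := natDegree_eq_zero.mp h
        apply huNU
        rw [← hc]
        exact Polynomial.isUnit_C.mpr (isUnit_iff_ne_zero.mpr (fun h0 => hu0 (by rw [← hc, h0, map_zero])))
    set N := (w.coeff k).natDegree with hN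
    obtain ⟨v, hv, hwv⟩ := hdiv (N + 1)
    have hdvd : u ^ (N + 1) ∣ w.coeff k := by
      have : w.coeff k = u ^ (N + 1) * v.coeff k := by
        rw [hwv, ← Polynomial.C_pow, Polynomial.coeff_C_mul]
      exact ⟨v.coeff k, this⟩
    have hle := Polynomial.natDegree_le_of_dvd hdvd hk
    rw [Polynomial.natDegree_pow] at hle
    have h1 : N + 1 ≤ (N + 1) * u.natDegree := Nat.le_mul_of_pos_right _ hun
    omega
  · haveI : (q2.map ρ).IsMaximal := IsPrime.to_maximal_ideal hbar
    have hq2max : q2.IsMaximal := by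
      have h := Ideal.comap_isMaximal_of_surjective ρ hρs (K := q2.map ρ)
      rwa [hcomapmap] at h
    exact l23.ne (hq2max.eq_of_le hp3.ne_top l23.le)

end Dim2


open Polynomial

section Loc
variable (A : Type*) [CommRing A] [IsDomain A]

/-- The constants embedding `A →+* A[x][y]`. -/
noncomputable def ccHom : A →+* Polynomial (Polynomial A) :=
  (Polynomial.C : Polynomial A →+* Polynomial (Polynomial A)).comp
    (Polynomial.C : A →+* Polynomial A)

/-- The image of `A⁰` in `A[x][y]`. -/
noncomputable def mmSub : Submonoid (Polynomial (Polynomial A)) :=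
  (nonZeroDivisors A).map (ccHom A)

/-- The map `A[x][y] → K[x][y]`, `K = Frac A`. -/
noncomputable def locMap :
    Polynomial (Polynomial A) →+* Polynomial (Polynomial (FractionRing A)) :=
  Polynomial.mapRingHom (Polynomial.mapRingHom (algebraMap A (FractionRing A)))

lemma locMap_CC (a : A) :
    locMap A (ccHom A a) = Polynomial.C (Polynomial.C (algebraMap A (FractionRing A) a)) := by
  unfold locMap ccHom
  simp

lemma locMap_X : locMap A Polynomial.X = Polynomial.X := by simp [locMap]

lemma locMap_CX : locMap A (Polynomial.C Polynomial.X) = Polynomial.C Polynomial.X := by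
  simp [locMap]

lemma locMap_injective : Function.Injective (locMap A) := by
  have h1 : Function.Injective (Polynomial.mapRingHom (algebraMap A (FractionRing A))) := by
    simpa [Polynomial.coe_mapRingHom] using
      Polynomial.map_injective (algebraMap A (FractionRing A))
        (IsFractionRing.injective A (FractionRing A))
  simpa [locMap, Polynomial.coe_mapRingHom] using Polynomial.map_injective _ h1

noncomputable instance locAlgebra :
    Algebra (Polynomial (Polynomial A)) (Polynomial (Polynomial (FractionRing A))) :=
  @RingHom.toAlgebra (Polynomial (Polynomial A)) (Polynomial (Polynomial (FractionRing A))) _ _ (locMap A)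

lemma locAlgebraMap_eq :
    algebraMap (Polynomial (Polynomial A)) (Polynomial (Polynomial (FractionRing A)))
      = locMap A := rfl

theorem isLocalization_mmSub :
    IsLocalization (mmSub A) (Polynomial (Polynomial (FractionRing A))) := by
  constructor
  constructor
  · -- map_units
    rintro ⟨x, a, ha, rfl⟩
    rw [locAlgebraMap_eq, locMap_CC]
    have : algebraMap A (FractionRing A) a ≠ 0 := by
      simpa [IsFractionRing.to_map_eq_zero_iff] using nonZeroDivisors.ne_zero ha
    exact Polynomial.isUnit_C.mpr (Polynomial.isUnit_C.mpr (isUnit_iff_ne_zero.mpr this))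
  · -- surj
    intro z
    rw [locAlgebraMap_eq]
    suffices h : ∃ (r : Polynomial (Polynomial A)) (s : A), s ∈ nonZeroDivisors A ∧
        z * locMap A (ccHom A s) = locMap A r by
      obtain ⟨r, s, hs, hzs⟩ := h
      exact ⟨⟨r, ⟨ccHom A s, Submonoid.mem_map.mpr ⟨s, hs, rfl⟩⟩⟩, hzs⟩
    have good_mul : ∀ z1 z2 : Polynomial (Polynomial (FractionRing A)),
        (∃ (r : Polynomial (Polynomial A)) (s : A), s ∈ nonZeroDivisors A ∧
          z1 * locMap A (ccHom A s) = locMap A r) →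
        (∃ (r : Polynomial (Polynomial A)) (s : A), s ∈ nonZeroDivisors A ∧
          z2 * locMap A (ccHom A s) = locMap A r) →
        (∃ (r : Polynomial (Polynomial A)) (s : A), s ∈ nonZeroDivisors A ∧
          z1 * z2 * locMap A (ccHom A s) = locMap A r) := by
      rintro z1 z2 ⟨r1, s1, hs1, h1⟩ ⟨r2, s2, hs2, h2⟩
      refine ⟨r1 * r2, s1 * s2, mul_mem hs1 hs2, ?_⟩
      rw [map_mul (ccHom A), map_mul (locMap A), map_mul (locMap A), ← h1, ← h2]
      ring
    have good_add : ∀ z1 z2 : Polynomial (Polynomial (FractionRing A)),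
        (∃ (r : Polynomial (Polynomial A)) (s : A), s ∈ nonZeroDivisors A ∧
          z1 * locMap A (ccHom A s) = locMap A r) →
        (∃ (r : Polynomial (Polynomial A)) (s : A), s ∈ nonZeroDivisors A ∧
          z2 * locMap A (ccHom A s) = locMap A r) →
        (∃ (r : Polynomial (Polynomial A)) (s : A), s ∈ nonZeroDivisors A ∧
          (z1 + z2) * locMap A (ccHom A s) = locMap A r) := by
      rintro z1 z2 ⟨r1, s1, hs1, h1⟩ ⟨r2, s2, hs2, h2⟩
      refine ⟨r1 * ccHom A s2 + r2 * ccHom A s1, s1 * s2, mul_mem hs1 hs2, ?_⟩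
      rw [map_mul (ccHom A), map_add (locMap A), map_mul (locMap A), map_mul (locMap A),
        map_mul (locMap A), ← h1, ← h2]
      ring
    have good_K : ∀ k : FractionRing A,
        ∃ (r : Polynomial (Polynomial A)) (s : A), s ∈ nonZeroDivisors A ∧
          Polynomial.C (Polynomial.C k) * locMap A (ccHom A s) = locMap A r := by
      intro k
      obtain ⟨⟨a, s⟩, hmk⟩ := IsLocalization.mk'_surjective (nonZeroDivisors A) k
      refine ⟨ccHom A a, s, s.2, ?_⟩
      rw [locMap_CC, locMap_CC, ← map_mul, ← map_mul]
      congr 1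
      rw [← hmk, IsLocalization.mk'_spec]
    have good_CX : ∃ (r : Polynomial (Polynomial A)) (s : A), s ∈ nonZeroDivisors A ∧
        (Polynomial.C Polynomial.X :
          Polynomial (Polynomial (FractionRing A))) * locMap A (ccHom A s) = locMap A r :=
      ⟨Polynomial.C Polynomial.X, 1, one_mem _, by rw [map_one, map_one, mul_one, locMap_CX]⟩
    have good_X : ∃ (r : Polynomial (Polynomial A)) (s : A), s ∈ nonZeroDivisors A ∧
        (Polynomial.X : Polynomial (Polynomial (FractionRing A))) * locMap A (ccHom A s)
          = locMap A r :=
      ⟨Polynomial.X, 1, one_mem _, by rw [map_one, map_one, mul_one, locMap_X]⟩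
    have good_pow : ∀ (z : Polynomial (Polynomial (FractionRing A))) (n : ℕ),
        (∃ (r : Polynomial (Polynomial A)) (s : A), s ∈ nonZeroDivisors A ∧
          z * locMap A (ccHom A s) = locMap A r) →
        (∃ (r : Polynomial (Polynomial A)) (s : A), s ∈ nonZeroDivisors A ∧
          z ^ n * locMap A (ccHom A s) = locMap A r) := by
      intro z n hz
      induction n with
      | zero => exact ⟨1, 1, one_mem _, by simp⟩
      | succ n ih =>
          have := good_mul _ _ ih hz
          simpa [pow_succ] using this
    induction z using Polynomial.induction_on' with
    | add p q hp hq => exact good_add p q hp hq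
    | monomial n w =>
        rw [← Polynomial.C_mul_X_pow_eq_monomial]
        refine good_mul _ _ ?_ (good_pow _ n good_X)
        induction w using Polynomial.induction_on' with
        | add p q hp hq =>
            rw [map_add]
            exact good_add _ _ hp hq
        | monomial m k =>
            rw [← Polynomial.C_mul_X_pow_eq_monomial, map_mul, map_pow]
            exact good_mul _ _ (good_K k) (good_pow _ m good_CX)
  · -- exists_of_eq
    intro x y hxy
    rw [locAlgebraMap_eq] at hxy
    exact ⟨1, by rw [locMap_injective A hxy]⟩

end Loc

section KeyC
open MvPolynomial
open scoped Classical
variable {σ F : Type*} [Field F]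

noncomputable def epsi (i j : σ) (hij : i ≠ j) :
    σ ≃ Option (Option {k : σ // k ≠ i ∧ k ≠ j}) where
  toFun k := if h : k = i then none else if h' : k = j then some none
             else some (some ⟨k, h, h'⟩)
  invFun o := o.elim i (fun o' => o'.elim j Subtype.val)
  left_inv k := by
    by_cases h : k = i
    · simp [h]
    · by_cases h' : k = j <;> simp [h, h', Ne.symm hij]
  right_inv o := by
    rcases o with _ | o
    · simp
    · rcases o with _ | ⟨k, h1, h2⟩
      · simp [Ne.symm hij]
      · simp [h1, h2]

noncomputable def bigEquiv (i j : σ) (hij : i ≠ j) :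
    MvPolynomial σ F ≃+*
      Polynomial (Polynomial (MvPolynomial {k : σ // k ≠ i ∧ k ≠ j} F)) :=
  (MvPolynomial.renameEquiv F (epsi i j hij)).toRingEquiv.trans
    ((MvPolynomial.optionEquivLeft F (Option {k : σ // k ≠ i ∧ k ≠ j})).toRingEquiv.trans
      (Polynomial.mapEquiv (MvPolynomial.optionEquivLeft F {k : σ // k ≠ i ∧ k ≠ j}).toRingEquiv))

lemma epsi_i (i j : σ) (hij : i ≠ j) : epsi i j hij i = none := by simp [epsi]

lemma epsi_j (i j : σ) (hij : i ≠ j) : epsi i j hij j = some none := by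
  simp [epsi, Ne.symm hij]

lemma bigEquiv_Xi (i j : σ) (hij : i ≠ j) :
    bigEquiv (F := F) i j hij (X i) = Polynomial.X := by
  simp [bigEquiv, epsi_i, optionEquivLeft_X_none, Polynomial.mapEquiv_apply]

lemma bigEquiv_Xj (i j : σ) (hij : i ≠ j) :
    bigEquiv (F := F) i j hij (X j) = Polynomial.C Polynomial.X := by
  simp [bigEquiv, epsi_j, optionEquivLeft_X_some, Polynomial.mapEquiv_apply,
    optionEquivLeft_X_none]

theorem keyC {i j : σ} (hij : i ≠ j) {p0 p1 p2 p3 : Ideal (MvPolynomial σ F)}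
    (h0 : p0.IsPrime) (h1 : p1.IsPrime) (h2 : p2.IsPrime) (h3 : p3.IsPrime)
    (l01 : p0 < p1) (l12 : p1 < p2) (l23 : p2 < p3)
    (hle : p3 ≤ Ideal.span {X i, X j}) : False := by
  classical
  haveI := h0; haveI := h1; haveI := h2; haveI := h3
  set A := MvPolynomial {k : σ // k ≠ i ∧ k ≠ j} F with hA
  set e := bigEquiv (F := F) i j hij with he
  set T : Ideal (MvPolynomial σ F) →
      Ideal (Polynomial (Polynomial A)) := fun p => Ideal.comap e.symm p with hT
  have Tmem : ∀ (p : Ideal (MvPolynomial σ F)) (x), x ∈ T p ↔ e.symm x ∈ p := by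
    intro p x; rfl
  have Tmono : ∀ {p p' : Ideal (MvPolynomial σ F)}, p < p' → T p < T p' := by
    intro p p' hpp'
    constructor
    · intro x hx
      exact hpp'.le ((Tmem p x).mp hx)
    · intro hcon
      obtain ⟨x, hxp', hxp⟩ := SetLike.exists_of_lt hpp'
      have hmem : e x ∈ T p' := by
        rw [Tmem, RingEquiv.symm_apply_apply]; exact hxp'
      have := (Tmem p (e x)).mp (hcon hmem)
      rw [RingEquiv.symm_apply_apply] at this
      exact hxp this
  have Tprime : ∀ (p : Ideal (MvPolynomial σ F)), p.IsPrime → (T p).IsPrime := by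
    intro p hp
    haveI := hp
    exact Ideal.IsPrime.comap _
  have hTle : T p3 ≤ Ideal.span
      {(Polynomial.X : Polynomial (Polynomial A)), Polynomial.C Polynomial.X} := by
    intro x hx
    have hx' : e.symm x ∈ Ideal.span {X i, X j} := hle ((Tmem p3 x).mp hx)
    have hmem : e (e.symm x) ∈ Ideal.map e (Ideal.span {X i, X j}) :=
      Ideal.mem_map_of_mem _ hx'
    rw [RingEquiv.apply_symm_apply, Ideal.map_span, Set.image_insert_eq,
      Set.image_singleton] at hmem
    simpa [he, bigEquiv_Xi, bigEquiv_Xj] using hmem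
  -- evaluation of both variables at zero
  set ev : Polynomial (Polynomial A) →+* A :=
    (Polynomial.evalRingHom (0 : A)).comp (Polynomial.evalRingHom (0 : Polynomial A)) with hev
  have hevQ : ∀ x ∈ Ideal.span
      {(Polynomial.X : Polynomial (Polynomial A)), Polynomial.C Polynomial.X}, ev x = 0 := by
    intro x hx
    have hker : Ideal.span
        {(Polynomial.X : Polynomial (Polynomial A)), Polynomial.C Polynomial.X}
          ≤ RingHom.ker ev := by
      rw [Ideal.span_le]
      intro y hy
      rcases Set.mem_insert_iff.mp hy with rfl | hy
      · simp [hev, RingHom.mem_ker]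
      · rw [Set.mem_singleton_iff.mp hy]
        simp [hev, RingHom.mem_ker]
    simpa [RingHom.mem_ker] using hker hx
  have hdisj : ∀ (p : Ideal (MvPolynomial σ F)), p ≤ p3 →
      Disjoint ((mmSub A : Submonoid (Polynomial (Polynomial A))) :
        Set (Polynomial (Polynomial A))) (T p : Set (Polynomial (Polynomial A))) := by
    intro p hp
    rw [Set.disjoint_left]
    intro x hxM hxT
    obtain ⟨a, ha, rfl⟩ := Submonoid.mem_map.mp hxM
    have hxx : ccHom A a ∈ T p3 := by
      have : T p ≤ T p3 := fun y hy => (Tmem p3 y).mpr (hp ((Tmem p y).mp hy))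
      exact this hxT
    have h0' : ev (ccHom A a) = 0 := hevQ _ (hTle hxx)
    have : a = 0 := by simpa [hev, ccHom] using h0'
    exact nonZeroDivisors.ne_zero ha this
  haveI := isLocalization_mmSub A
  set OI := IsLocalization.orderIsoOfPrime (mmSub A)
    (Polynomial (Polynomial (FractionRing A))) with hOI
  let s0 : {pp : Ideal (Polynomial (Polynomial A)) // pp.IsPrime ∧
      Disjoint ((mmSub A : Submonoid _) : Set (Polynomial (Polynomial A))) ↑pp} :=
    ⟨T p0, Tprime p0 h0, hdisj p0 (l01.le.trans (l12.le.trans l23.le))⟩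
  let s1 : {pp : Ideal (Polynomial (Polynomial A)) // pp.IsPrime ∧
      Disjoint ((mmSub A : Submonoid _) : Set (Polynomial (Polynomial A))) ↑pp} :=
    ⟨T p1, Tprime p1 h1, hdisj p1 (l12.le.trans l23.le)⟩
  let s2 : {pp : Ideal (Polynomial (Polynomial A)) // pp.IsPrime ∧
      Disjoint ((mmSub A : Submonoid _) : Set (Polynomial (Polynomial A))) ↑pp} :=
    ⟨T p2, Tprime p2 h2, hdisj p2 l23.le⟩
  let s3 : {pp : Ideal (Polynomial (Polynomial A)) // pp.IsPrime ∧
      Disjoint ((mmSub A : Submonoid _) : Set (Polynomial (Polynomial A))) ↑pp} :=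
    ⟨T p3, Tprime p3 h3, hdisj p3 le_rfl⟩
  have c01 : OI.symm s0 < OI.symm s1 := by
    rw [OrderIso.lt_iff_lt]
    exact Subtype.mk_lt_mk.mpr (Tmono l01)
  have c12 : OI.symm s1 < OI.symm s2 := by
    rw [OrderIso.lt_iff_lt]
    exact Subtype.mk_lt_mk.mpr (Tmono l12)
  have c23 : OI.symm s2 < OI.symm s3 := by
    rw [OrderIso.lt_iff_lt]
    exact Subtype.mk_lt_mk.mpr (Tmono l23)
  exact no_chain4 (OI.symm s1).2 (OI.symm s2).2 (OI.symm s3).2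
    (Subtype.coe_lt_coe.mpr c01) (Subtype.coe_lt_coe.mpr c12) (Subtype.coe_lt_coe.mpr c23)

end KeyC


open MvPolynomial
open scoped Classical

-- ===== order height lemmas =====
section HeightLemmas
variable {α : Type*} [Preorder α]

lemma height_succ_le_of_lt {a b : α} (h : a < b) :
    Order.height a + 1 ≤ Order.height b := by
  rw [Order.height_eq_iSup_lt_height b]
  exact le_iSup₂ (f := fun y (_ : y < b) => Order.height y + 1) a h

lemma two_le_height {x0 x1 x2 : α} (h01 : x0 < x1) (h12 : x1 < x2) :
    2 ≤ Order.height x2 := by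
  have h1 := height_succ_le_of_lt h01
  have h2 := height_succ_le_of_lt h12
  calc (2 : ℕ∞) = 0 + 1 + 1 := by norm_num
    _ ≤ Order.height x0 + 1 + 1 := by
        exact add_le_add_left (add_le_add_left zero_le 1) 1
    _ ≤ Order.height x1 + 1 := add_le_add_left h1 1
    _ ≤ Order.height x2 := h2

lemma three_le_height {x0 x1 x2 x3 : α} (h01 : x0 < x1) (h12 : x1 < x2) (h23 : x2 < x3) :
    3 ≤ Order.height x3 := by
  have h2 := two_le_height h01 h12
  have h3 := height_succ_le_of_lt h23
  calc (3 : ℕ∞) = 2 + 1 := by norm_num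
    _ ≤ Order.height x2 + 1 := add_le_add_left h2 1
    _ ≤ Order.height x3 := h3

lemma height_le_two {x : α}
    (h : ∀ a b c : α, a < b → b < c → c < x → False) : Order.height x ≤ 2 := by
  have h2 : Order.height x ≤ ((2 : ℕ) : ℕ∞) := by
    rw [Order.height_le_coe_iff]
    intro y hy
    have h1 : Order.height y ≤ ((1 : ℕ) : ℕ∞) := by
      rw [Order.height_le_coe_iff]
      intro z hz
      have h0 : Order.height z ≤ ((0 : ℕ) : ℕ∞) := by
        rw [Order.height_le_coe_iff]
        intro w hw
        exact (h w z y hw hz hy).elim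
      exact lt_of_le_of_lt h0 (by norm_num)
    exact lt_of_le_of_lt h1 (by norm_num)
  simpa using h2

end HeightLemmas

-- ===== lattice facts =====
section LatticeFacts
variable {L : Type*} [Lattice L] [BoundedOrder L]

lemma joinIrred_ne_bot {p : L} (hp : JoinIrred p) : p ≠ ⊥ := by
  rintro rfl
  apply hp
  constructor
  · intro q hq
    exact absurd hq (not_lt_bot)
  · intro c _
    exact bot_le

lemma joinIrred_sup {p u v : L} (hp : JoinIrred p) (h : p = u ⊔ v) : p = u ∨ p = v := by
  by_contra hcon
  push_neg at hcon
  obtain ⟨hu, hv⟩ := hcon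
  apply hp
  have hul : u < p := lt_of_le_of_ne (h ▸ le_sup_left) (fun hh => hu hh.symm)
  have hvl : v < p := lt_of_le_of_ne (h ▸ le_sup_right) (fun hh => hv hh.symm)
  constructor
  · intro q hq
    exact hq.le
  · intro c hc
    rw [h]
    exact sup_le (hc hul) (hc hvl)

lemma joinIrred_le_sup {p u v : L}
    (D : ∀ a b c : L, a ⊓ (b ⊔ c) = (a ⊓ b) ⊔ (a ⊓ c))
    (hp : JoinIrred p) (h : p ≤ u ⊔ v) : p ≤ u ∨ p ≤ v := by
  have h1 : p = (p ⊓ u) ⊔ (p ⊓ v) := by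
    rw [← D]
    exact (inf_eq_left.mpr h).symm
  rcases joinIrred_sup hp h1 with h2 | h2
  · left
    rw [h2]
    exact inf_le_right
  · right
    rw [h2]
    exact inf_le_right

lemma joinIrred_le_finsetSup {ι : Type*}
    (D : ∀ a b c : L, a ⊓ (b ⊔ c) = (a ⊓ b) ⊔ (a ⊓ c))
    {p : L} (hp : JoinIrred p)
    (t : Finset ι) (f : ι → L) (h : p ≤ t.sup f) : ∃ i ∈ t, p ≤ f i := by
  classical
  revert h
  induction t using Finset.induction_on with
  | empty =>
      intro h
      exact absurd (le_bot_iff.mp (by simpa using h)) (joinIrred_ne_bot hp)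
  | @insert a s hnot ih =>
      intro h
      rw [Finset.sup_insert] at h
      rcases joinIrred_le_sup D hp h with h' | h'
      · exact ⟨a, Finset.mem_insert_self _ _, h'⟩
      · obtain ⟨i, hi, hle⟩ := ih h'
        exact ⟨i, Finset.mem_insert_of_mem hi, hle⟩

lemma le_of_forall_joinIrred_le [Finite L] {u v : L}
    (h : ∀ a : L, JoinIrred a → a ≤ u → a ≤ v) : u ≤ v := by
  revert h
  induction u using WellFoundedLT.induction with
  | _ u ih =>
    intro h
    by_cases hJ : JoinIrred u
    · exact h u hJ le_rfl
    · have hlub : IsLUB {q : L | q < u} u := not_not.mp hJ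
      exact hlub.2 (fun q hq => ih q hq (fun a ha hau => h a ha (hau.trans hq.le)))

end LatticeFacts

-- ===== covers =====
section Cover
variable {L : Type*} [Fintype L] [Lattice L] [BoundedOrder L] (F : Type*) [Field F]

/-- Which variable of `u_q` is indexed by the join-irreducible `p`. -/
noncomputable def gq (q : L) (p : {p : L // JoinIrred p}) :
    ({p : L // JoinIrred p}) ⊕ ({p : L // JoinIrred p}) :=
  if (p : L) ≤ q then Sum.inl p else Sum.inr p

/-- A set of variables covering all the generators `u_q`. -/
def IsCover (s : Set (({p : L // JoinIrred p}) ⊕ ({p : L // JoinIrred p}))) : Prop :=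
  ∀ q : L, ∃ p, gq q p ∈ s

lemma uMon_eq_prod (q : L) :
    uMon F q = ∏ p : {p : L // JoinIrred p}, X (gq q p) := by
  refine Finset.prod_congr rfl (fun p _ => ?_)
  unfold gq
  split_ifs with h <;> simp [h]

noncomputable def eExp (q : L) : (({p : L // JoinIrred p}) ⊕ ({p : L // JoinIrred p})) →₀ ℕ :=
  ∑ p : {p : L // JoinIrred p}, Finsupp.single (gq q p) 1

lemma uMon_eq_monomial (q : L) : uMon F q = monomial (eExp q) 1 := by
  rw [uMon_eq_prod, prod_X_eq_monomial, eExp]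

lemma eExp_ne_zero_iff (q : L) (i : ({p : L // JoinIrred p}) ⊕ ({p : L // JoinIrred p})) :
    eExp q i ≠ 0 ↔ ∃ p, gq q p = i := by
  rw [eExp, Finsupp.finset_sum_apply]
  constructor
  · intro h
    by_contra hcon
    push_neg at hcon
    apply h
    refine Finset.sum_eq_zero (fun p _ => ?_)
    rw [Finsupp.single_apply, if_neg (hcon p)]
  · rintro ⟨p, hp⟩
    intro h
    have := Finset.sum_eq_zero_iff.mp h p (Finset.mem_univ p)
    rw [Finsupp.single_apply, hp] at this
    simp at this

lemma uMon_mem_span_iff (q : L)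
    (s : Set (({p : L // JoinIrred p}) ⊕ ({p : L // JoinIrred p}))) :
    uMon F q ∈ Ideal.span
        (X '' s : Set (MvPolynomial (({p : L // JoinIrred p}) ⊕ ({p : L // JoinIrred p})) F)) ↔
      ∃ p, gq q p ∈ s := by
  rw [uMon_eq_monomial, monomial_mem_span_X_iff]
  constructor
  · rintro ⟨i, his, hne⟩
    obtain ⟨p, rfl⟩ := (eExp_ne_zero_iff q i).mp hne
    exact ⟨p, his⟩
  · rintro ⟨p, hp⟩
    exact ⟨gq q p, hp, (eExp_ne_zero_iff q _).mpr ⟨p, rfl⟩⟩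

lemma HL_le_span_iff
    (s : Set (({p : L // JoinIrred p}) ⊕ ({p : L // JoinIrred p}))) :
    Ideal.span (Set.range (fun q : L => uMon F q)) ≤ Ideal.span (X '' s) ↔ IsCover s := by
  rw [Ideal.span_le]
  constructor
  · intro h q
    exact (uMon_mem_span_iff F q s).mp (h (Set.mem_range_self q))
  · intro h
    rintro _ ⟨q, rfl⟩
    exact (uMon_mem_span_iff F q s).mpr (h q)

lemma cover_of_prime {Q : Ideal (MvPolynomial (({p : L // JoinIrred p}) ⊕ ({p : L // JoinIrred p})) F)}
    (hQ : Q.IsPrime) (hle : Ideal.span (Set.range (fun q : L => uMon F q)) ≤ Q) :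
    IsCover {i | X i ∈ Q} := by
  intro q
  have hu : uMon F q ∈ Q := hle (Ideal.subset_span (Set.mem_range_self q))
  rw [uMon_eq_prod] at hu
  haveI := hQ
  obtain ⟨p, _, hp⟩ := (Ideal.IsPrime.prod_mem_iff).mp hu
  exact ⟨p, hp⟩

lemma span_vars_le_prime
    {Q : Ideal (MvPolynomial (({p : L // JoinIrred p}) ⊕ ({p : L // JoinIrred p})) F)} :
    Ideal.span (X '' {i | X i ∈ Q}) ≤ Q := by
  rw [Ideal.span_le]
  rintro _ ⟨i, hi, rfl⟩
  exact hi

/-- A minimal cover generates a minimal prime. -/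
lemma minPrime_of_minCover
    {s : Set (({p : L // JoinIrred p}) ⊕ ({p : L // JoinIrred p}))}
    (hs : IsCover s) (hmin : ∀ t, t ⊆ s → IsCover t → t = s) :
    Ideal.span (X '' s : Set (MvPolynomial (({p : L // JoinIrred p}) ⊕ ({p : L // JoinIrred p})) F))
      ∈ (Ideal.span (Set.range (fun q : L => uMon F q))).minimalPrimes := by
  constructor
  · exact ⟨isPrime_span_X s, (HL_le_span_iff F s).mpr hs⟩
  · rintro J ⟨hJp, hJle⟩ hle
    set t := {i | X i ∈ J}
    have htc : IsCover t := cover_of_prime F hJp hJle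
    have hts : t ⊆ s := by
      intro i hi
      exact X_mem_span_X_iff.mp (hle hi)
    rw [← hmin t hts htc]
    exact span_vars_le_prime F

/-- A minimal prime is the span of the variables it contains, which form a minimal cover. -/
lemma minCover_of_minPrime
    {Q : Ideal (MvPolynomial (({p : L // JoinIrred p}) ⊕ ({p : L // JoinIrred p})) F)}
    (hQ : Q ∈ (Ideal.span (Set.range (fun q : L => uMon F q))).minimalPrimes) :
    Q = Ideal.span (X '' {i | X i ∈ Q}) ∧ IsCover {i | X i ∈ Q} ∧
      ∀ t, t ⊆ {i | X i ∈ Q} → IsCover t → t = {i | X i ∈ Q} := by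
  obtain ⟨⟨hQp, hQle⟩, hQmin⟩ := hQ
  set s := {i | X i ∈ Q} with hsdef
  have hsc : IsCover s := cover_of_prime F hQp hQle
  have hsQ : Ideal.span (X '' s) ≤ Q := span_vars_le_prime F
  have hQs : Q = Ideal.span (X '' s) :=
    le_antisymm (hQmin ⟨isPrime_span_X s, (HL_le_span_iff F s).mpr hsc⟩ hsQ) hsQ
  refine ⟨hQs, hsc, ?_⟩
  intro t hts htc
  have h1 : Ideal.span (X '' t) ≤ Q := (span_X_mono hts).trans hsQ
  have h2 : Q ≤ Ideal.span (X '' t) :=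
    hQmin ⟨isPrime_span_X t, (HL_le_span_iff F t).mpr htc⟩ h1
  refine Set.Subset.antisymm hts (fun i hi => ?_)
  exact X_mem_span_X_iff.mp (h2 hi)

lemma exists_minCover
    {s : Set (({p : L // JoinIrred p}) ⊕ ({p : L // JoinIrred p}))} (hs : IsCover s) :
    ∃ t, t ⊆ s ∧ IsCover t ∧ ∀ t', t' ⊆ t → IsCover t' → t' = t := by
  revert hs
  induction s using WellFoundedLT.induction with
  | _ s ih =>
    intro hs
    by_cases hmin : ∀ t', t' ⊆ s → IsCover t' → t' = s
    · exact ⟨s, subset_rfl, hs, hmin⟩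
    · push_neg at hmin
      obtain ⟨t', ht's, ht'c, ht'ne⟩ := hmin
      obtain ⟨t, h1, h2, h3⟩ := ih t' (lt_of_le_of_ne ht's ht'ne) ht'c
      exact ⟨t, h1.trans ht's, h2, h3⟩

-- cover shapes
lemma pair_cover (a b : {p : L // JoinIrred p}) (hab : (a : L) ≤ b) :
    IsCover {Sum.inl a, Sum.inr b} := by
  intro q
  by_cases h : (b : L) ≤ q
  · exact ⟨a, by simp [gq, (hab.trans h)]⟩
  · exact ⟨b, by simp [gq, h]⟩

lemma cover_inr {s : Set (({p : L // JoinIrred p}) ⊕ ({p : L // JoinIrred p}))}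
    (hs : IsCover s) : ∃ p, Sum.inr p ∈ s := by
  obtain ⟨p, hp⟩ := hs ⊥
  have : ¬ (p : L) ≤ ⊥ := fun h => joinIrred_ne_bot p.2 (le_bot_iff.mp h)
  rw [gq, if_neg this] at hp
  exact ⟨p, hp⟩

lemma cover_inl {s : Set (({p : L // JoinIrred p}) ⊕ ({p : L // JoinIrred p}))}
    (hs : IsCover s) : ∃ p, Sum.inl p ∈ s := by
  obtain ⟨p, hp⟩ := hs ⊤
  rw [gq, if_pos le_top] at hp
  exact ⟨p, hp⟩

lemma cover_pair_le {a b : {p : L // JoinIrred p}}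
    {s : Set (({p : L // JoinIrred p}) ⊕ ({p : L // JoinIrred p}))}
    (hs : IsCover s) (hsub : s ⊆ {Sum.inl a, Sum.inr b}) : (a : L) ≤ b := by
  obtain ⟨p, hp⟩ := hs (b : L)
  by_cases hle : (p : L) ≤ (b : L)
  · rw [gq, if_pos hle] at hp
    rcases hsub hp with h | h
    · obtain rfl : p = a := Sum.inl.inj h
      exact hle
    · exact absurd (Set.mem_singleton_iff.mp h) (by simp)
  · rw [gq, if_neg hle] at hp
    rcases hsub hp with h | h
    · exact absurd h (by simp)
    · have h' : p = b := Sum.inr.inj (Set.mem_singleton_iff.mp h)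
      rw [h'] at hle
      exact absurd le_rfl hle

lemma distrib_cover_pair
    (D : ∀ a b c : L, a ⊓ (b ⊔ c) = (a ⊓ b) ⊔ (a ⊓ c))
    {s : Set (({p : L // JoinIrred p}) ⊕ ({p : L // JoinIrred p}))}
    (hs : IsCover s) :
    ∃ a b : {p : L // JoinIrred p}, (a : L) ≤ b ∧ Sum.inl a ∈ s ∧ Sum.inr b ∈ s := by
  classical
  set Bf : Finset {p : L // JoinIrred p} :=
    Finset.univ.filter (fun p => Sum.inr p ∈ s) with hBf
  set q0 : L := Bf.sup (fun p => (p : L)) with hq0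
  obtain ⟨p, hp⟩ := hs q0
  by_cases h : (p : L) ≤ q0
  · rw [gq, if_pos h] at hp
    obtain ⟨b, hbB, hble⟩ := joinIrred_le_finsetSup D p.2 Bf (fun p => (p : L)) h
    have hbs : Sum.inr b ∈ s := (Finset.mem_filter.mp hbB).2
    exact ⟨p, b, hble, hp, hbs⟩
  · rw [gq, if_neg h] at hp
    exfalso
    apply h
    exact Finset.le_sup (Finset.mem_filter.mpr ⟨Finset.mem_univ p, hp⟩)

lemma nondistrib_cover
    (hD : ¬ ∀ a b c : L, a ⊓ (b ⊔ c) = (a ⊓ b) ⊔ (a ⊓ c)) :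
    ∃ s : Set (({p : L // JoinIrred p}) ⊕ ({p : L // JoinIrred p})),
      IsCover s ∧ ∀ a b : {p : L // JoinIrred p}, (a : L) ≤ b →
        ¬(Sum.inl a ∈ s ∧ Sum.inr b ∈ s) := by
  push_neg at hD
  obtain ⟨x, y, z, hxyz⟩ := hD
  set w : L := (x ⊓ y) ⊔ (x ⊓ z) with hw
  have hwle : w ≤ x ⊓ (y ⊔ z) :=
    sup_le (le_inf inf_le_left (inf_le_right.trans le_sup_left))
      (le_inf inf_le_left (inf_le_right.trans le_sup_right))
  have hnle : ¬ x ⊓ (y ⊔ z) ≤ w := fun h => hxyz (le_antisymm h hwle)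
  obtain ⟨a, haJ, hax, haw⟩ : ∃ a : L, JoinIrred a ∧ a ≤ x ⊓ (y ⊔ z) ∧ ¬ a ≤ w := by
    by_contra hcon
    push_neg at hcon
    exact hnle (le_of_forall_joinIrred_le (fun a ha hau => hcon a ha hau))
  set aP : {p : L // JoinIrred p} := ⟨a, haJ⟩ with haP
  set s : Set (({p : L // JoinIrred p}) ⊕ ({p : L // JoinIrred p})) :=
    {Sum.inl aP} ∪ {i | ∃ b : {p : L // JoinIrred p},
      i = Sum.inr b ∧ ((b : L) ≤ y ∨ (b : L) ≤ z)} with hsdef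
  refine ⟨s, ?_, ?_⟩
  · intro q
    by_cases hy : y ≤ q
    · by_cases hz : z ≤ q
      · refine ⟨aP, ?_⟩
        have : (aP : L) ≤ q := hax.trans (inf_le_right.trans (sup_le hy hz))
        rw [gq, if_pos this]
        exact Or.inl rfl
      · obtain ⟨b, hbJ, hby, hbq⟩ : ∃ b : L, JoinIrred b ∧ b ≤ z ∧ ¬ b ≤ q := by
          by_contra hcon
          push_neg at hcon
          exact hz (le_of_forall_joinIrred_le (fun b hb hbz => hcon b hb hbz))
        refine ⟨⟨b, hbJ⟩, ?_⟩
        rw [gq, if_neg hbq]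
        exact Or.inr ⟨⟨b, hbJ⟩, rfl, Or.inr hby⟩
    · obtain ⟨b, hbJ, hby, hbq⟩ : ∃ b : L, JoinIrred b ∧ b ≤ y ∧ ¬ b ≤ q := by
        by_contra hcon
        push_neg at hcon
        exact hy (le_of_forall_joinIrred_le (fun b hb hbz => hcon b hb hbz))
      refine ⟨⟨b, hbJ⟩, ?_⟩
      rw [gq, if_neg hbq]
      exact Or.inr ⟨⟨b, hbJ⟩, rfl, Or.inl hby⟩
  · rintro a' b' ha'b' ⟨ha', hb'⟩
    have ha'aP : a' = aP := by
      rcases ha' with h | h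
      · exact Sum.inl.inj h
      · obtain ⟨b, hb, _⟩ := h
        exact absurd hb (by simp)
    rcases hb' with h | h
    · exact absurd h (by simp)
    · obtain ⟨b, hb, hbyz⟩ := h
      have hb'b : b' = b := Sum.inr.inj hb
      apply haw
      have hab' : a ≤ (b : L) := by
        have hthis : (a' : L) ≤ (b' : L) := ha'b'
        rw [ha'aP, hb'b] at hthis
        exact hthis
      rcases hbyz with hyy | hzz
      · exact (le_inf (hax.trans inf_le_left) (hab'.trans hyy)).trans le_sup_left
      · exact (le_inf (hax.trans inf_le_left) (hab'.trans hzz)).trans le_sup_right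

end Cover


/-- Proposition 1.7(ii): for a finite lattice `L`, every minimal prime ideal of `H_L`
has height `2` if and only if `L` is distributive. -/
theorem stmt6 {L : Type*} [Fintype L] [Lattice L] [BoundedOrder L]
    (F : Type*) [Field F] :
    (∀ Q : PrimeSpectrum (MvPolynomial
          ({p : L // JoinIrred p} ⊕ {p : L // JoinIrred p}) F),
        Q.asIdeal ∈ (Ideal.span (Set.range (fun q : L => uMon F q))).minimalPrimes →
          Order.height Q = 2) ↔
      ∀ p q r : L, p ⊓ (q ⊔ r) = (p ⊓ q) ⊔ (p ⊓ r) := by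
  classical
  constructor
  · intro hH
    by_contra hD
    obtain ⟨s, hsc, hsfree⟩ := nondistrib_cover hD
    obtain ⟨t, hts, htc, htmin⟩ := exists_minCover hsc
    have htfree : ∀ a b : {p : L // JoinIrred p}, (a : L) ≤ b →
        ¬(Sum.inl a ∈ t ∧ Sum.inr b ∈ t) :=
      fun a b hab h => hsfree a b hab ⟨hts h.1, hts h.2⟩
    obtain ⟨aP, haP⟩ := cover_inl htc
    obtain ⟨bP, hbP⟩ := cover_inr htc
    have hsub : ¬ t ⊆ {Sum.inl aP, Sum.inr bP} :=
      fun hsub => htfree aP bP (cover_pair_le htc hsub) ⟨haP, hbP⟩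
    obtain ⟨i3, hi3t, hi3⟩ := Set.not_subset.mp hsub
    set Q : PrimeSpectrum (MvPolynomial ({p : L // JoinIrred p} ⊕ {p : L // JoinIrred p}) F) :=
      ⟨Ideal.span (X '' t), isPrime_span_X t⟩ with hQdef
    have hQmin := minPrime_of_minCover F htc htmin
    have hH2 := hH Q hQmin
    set x0 : PrimeSpectrum (MvPolynomial ({p : L // JoinIrred p} ⊕ {p : L // JoinIrred p}) F) :=
      ⟨Ideal.span (X '' (∅ : Set _)), isPrime_span_X ∅⟩ with hx0
    set x1 : PrimeSpectrum (MvPolynomial ({p : L // JoinIrred p} ⊕ {p : L // JoinIrred p}) F) :=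
      ⟨Ideal.span (X '' {Sum.inl aP}), isPrime_span_X _⟩ with hx1
    set x2 : PrimeSpectrum (MvPolynomial ({p : L // JoinIrred p} ⊕ {p : L // JoinIrred p}) F) :=
      ⟨Ideal.span (X '' {Sum.inl aP, Sum.inr bP}), isPrime_span_X _⟩ with hx2
    have c01 : x0 < x1 := (PrimeSpectrum.asIdeal_lt_asIdeal _ _).mp
      (span_X_lt (Set.empty_subset _) (Set.mem_singleton _) (Set.notMem_empty _))
    have c12 : x1 < x2 := (PrimeSpectrum.asIdeal_lt_asIdeal _ _).mp
      (span_X_lt (Set.singleton_subset_iff.mpr (Set.mem_insert _ _))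
        (Set.mem_insert_iff.mpr (Or.inr (Set.mem_singleton _))) (by simp))
    have c23 : x2 < Q := by
      refine (PrimeSpectrum.asIdeal_lt_asIdeal _ _).mp (span_X_lt ?_ hi3t hi3)
      rintro i hi
      rcases hi with rfl | hi
      · exact haP
      · rw [Set.mem_singleton_iff] at hi
        subst hi
        exact hbP
    have h3 := three_le_height c01 c12 c23
    rw [hH2] at h3
    norm_num at h3
  · intro hD Q hQmin
    obtain ⟨hQs, hsc, hsmin⟩ := minCover_of_minPrime F hQmin
    obtain ⟨a, b, hab, hain, hbin⟩ := distrib_cover_pair hD hsc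
    have hpair : ({Sum.inl a, Sum.inr b} : Set _) = {i | X i ∈ Q.asIdeal} := by
      apply hsmin
      · rintro i hi
        rcases hi with rfl | hi
        · exact hain
        · rw [Set.mem_singleton_iff] at hi
          subst hi
          exact hbin
      · exact pair_cover a b hab
    have hQeq : Q.asIdeal = Ideal.span {X (Sum.inl a), X (Sum.inr b)} := by
      rw [hQs, ← hpair, Set.image_insert_eq, Set.image_singleton]
    refine le_antisymm ?_ ?_
    · apply height_le_two
      intro u v w huv hvw hwQ
      exact keyC (show (Sum.inl a : {p : L // JoinIrred p} ⊕ {p : L // JoinIrred p}) ≠ Sum.inr b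
          by simp)
        u.2 v.2 w.2 Q.2
        ((PrimeSpectrum.asIdeal_lt_asIdeal _ _).mpr huv)
        ((PrimeSpectrum.asIdeal_lt_asIdeal _ _).mpr hvw)
        ((PrimeSpectrum.asIdeal_lt_asIdeal _ _).mpr hwQ)
        hQeq.le
    · set x0 : PrimeSpectrum (MvPolynomial ({p : L // JoinIrred p} ⊕ {p : L // JoinIrred p}) F) :=
        ⟨Ideal.span (X '' (∅ : Set _)), isPrime_span_X ∅⟩ with hx0
      set x1 : PrimeSpectrum (MvPolynomial ({p : L // JoinIrred p} ⊕ {p : L // JoinIrred p}) F) :=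
        ⟨Ideal.span (X '' {Sum.inl a}), isPrime_span_X _⟩ with hx1
      have c01 : x0 < x1 := (PrimeSpectrum.asIdeal_lt_asIdeal _ _).mp
        (span_X_lt (Set.empty_subset _) (Set.mem_singleton _) (Set.notMem_empty _))
      have c12 : x1 < Q := by
        refine (PrimeSpectrum.asIdeal_lt_asIdeal _ _).mp ?_
        rw [hQs, ← hpair]
        refine span_X_lt (j := Sum.inr b) ?_ ?_ ?_
        · exact Set.singleton_subset_iff.mpr (Set.mem_insert _ _)
        · exact Set.mem_insert_iff.mpr (Or.inr (Set.mem_singleton _))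
        · simp
      exact two_le_height c01 c12
end

section
/- Let L be a finite upper semimodular lattice. Then the ideal H_L has linear quotients if and only if L is distributive. -/
open MvPolynomial

/-- `H_L` has *linear quotients*: its minimal monomial generators `u_q`, `q ∈ L`, can be
ordered `u_1, …, u_m` so that each colon ideal `(u_1, …, u_{i-1}) : u_i` is generated by a
set of variables. -/
def HasLinearQuotientsHL (L : Type*) [Preorder L] [Fintype L] (F : Type*) [Field F] : Prop :=
  ∃ e : Fin (Fintype.card L) ≃ L, ∀ i : Fin (Fintype.card L),
    ∃ T : Set ({p : L // JoinIrred p} ⊕ {p : L // JoinIrred p}),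
      Submodule.colon (Ideal.span ((fun j => uMon F (e j)) '' {j | j < i}))
          (Ideal.span {uMon F (e i)}) =
        Ideal.span ((fun s => (X s : MvPolynomial _ F)) '' T)

namespace HLQAux

variable {L : Type*} [Fintype L] [Lattice L] [BoundedOrder L]

abbrev JI (L : Type*) [Preorder L] := {p : L // JoinIrred p}

open scoped Classical
set_option linter.unusedSectionVars false

noncomputable def lset (q : L) : Finset (JI L) :=
  Finset.univ.filter (fun p => (p : L) ≤ q)

lemma mem_lset {q : L} {p : JI L} : p ∈ lset q ↔ (p : L) ≤ q := by
  simp [lset]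

lemma not_joinIrred_bot : ¬ JoinIrred (⊥ : L) := by
  intro h
  exact h ⟨fun q hq => absurd hq (not_lt_bot), fun b _ => bot_le⟩

lemma lset_mono {a b : L} (h : a ≤ b) : lset a ⊆ lset b := by
  intro p hp
  exact mem_lset.mpr ((mem_lset.mp hp).trans h)

lemma sup_lset (q : L) : (lset q).sup Subtype.val = q := by
  induction q using WellFoundedLT.induction with
  | _ q ih =>
    apply le_antisymm
    · exact Finset.sup_le fun p hp => mem_lset.mp hp
    · by_cases hq : JoinIrred q
      · have hmem : (⟨q, hq⟩ : JI L) ∈ lset q := mem_lset.mpr le_rfl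
        exact Finset.le_sup (f := Subtype.val) hmem
      · rw [JoinIrred, not_not] at hq
        refine hq.2 fun r hr => ?_
        calc r = (lset r).sup Subtype.val := (ih r hr).symm
        _ ≤ (lset q).sup Subtype.val := Finset.sup_mono (lset_mono hr.le)

lemma le_of_lset_subset {a b : L} (h : lset a ⊆ lset b) : a ≤ b := by
  rw [← sup_lset a, ← sup_lset b]
  exact Finset.sup_mono h

lemma lset_inj {a b : L} (h : lset a = lset b) : a = b :=
  le_antisymm (le_of_lset_subset h.le) (le_of_lset_subset h.ge)

lemma lset_ssubset {a b : L} (h : a < b) : lset a ⊂ lset b :=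
  ⟨lset_mono h.le, fun hs => absurd (lset_inj (le_antisymm (lset_mono h.le) hs)) h.ne⟩

lemma lset_inf (a b : L) : lset (a ⊓ b) = lset a ∩ lset b := by
  ext p
  simp [mem_lset, le_inf_iff]

lemma covby_of_erase {b c : L} {p : JI L} (hc : lset c = (lset b).erase p)
    (hp : p ∈ lset b) : c ⋖ b := by
  have hsub : lset c ⊆ lset b := by rw [hc]; exact Finset.erase_subset _ _
  have hne : c ≠ b := by
    intro h; rw [h] at hc
    exact (Finset.notMem_erase p _) (hc ▸ hp)
  have hcard : (lset c).card + 1 = (lset b).card := by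
    rw [hc, Finset.card_erase_of_mem hp]
    have : 1 ≤ (lset b).card := Finset.card_pos.mpr ⟨p, hp⟩
    omega
  refine ⟨lt_of_le_of_ne (le_of_lset_subset hsub) hne, fun x hcx hxb => ?_⟩
  have h1 := Finset.card_lt_card (lset_ssubset hcx)
  have h2 := Finset.card_lt_card (lset_ssubset hxb)
  omega

lemma covby_of_insert {b c : L} {p : JI L} (hc : lset c = insert p (lset b))
    (hp : p ∉ lset b) : b ⋖ c := by
  classical
  have : lset b = (lset c).erase p := by
    rw [hc, Finset.erase_insert hp]
  exact covby_of_erase this (by rw [hc]; exact Finset.mem_insert_self _ _)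

section Dist

variable (hd : ∀ p q r : L, p ⊓ (q ⊔ r) = (p ⊓ q) ⊔ (p ⊓ r))
include hd

lemma joinIrred_prime {p a b : L} (hp : JoinIrred p) (h : p ≤ a ⊔ b) :
    p ≤ a ∨ p ≤ b := by
  by_contra hcon
  push_neg at hcon
  have hpa : p ⊓ a < p := lt_of_le_of_ne inf_le_left (fun he => hcon.1 (he ▸ inf_le_right))
  have hpb : p ⊓ b < p := lt_of_le_of_ne inf_le_left (fun he => hcon.2 (he ▸ inf_le_right))
  have hsup : (p ⊓ a) ⊔ (p ⊓ b) = p := by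
    rw [← hd]; exact inf_eq_left.mpr h
  exact hp ⟨fun q hq => hq.le, fun w hw => by
    have h1 : p ⊓ a ≤ w := hw hpa
    have h2 : p ⊓ b ≤ w := hw hpb
    calc p = (p ⊓ a) ⊔ (p ⊓ b) := hsup.symm
    _ ≤ w := sup_le h1 h2⟩

lemma joinIrred_le_finset_sup {p : JI L} {D : Finset (JI L)}
    (h : (p : L) ≤ D.sup Subtype.val) : ∃ d ∈ D, (p : L) ≤ (d : L) := by
  classical
  induction D using Finset.induction with
  | empty =>
    simp only [Finset.sup_empty] at h
    exact absurd (le_bot_iff.mp h ▸ p.2) not_joinIrred_bot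
  | insert a s _ ih =>
    rw [Finset.sup_insert] at h
    rcases joinIrred_prime hd p.2 h with h' | h'
    · exact ⟨a, Finset.mem_insert_self _ _, h'⟩
    · obtain ⟨d, hd', hle⟩ := ih h'
      exact ⟨d, Finset.mem_insert_of_mem hd', hle⟩

lemma lset_sup_of_downset {D : Finset (JI L)}
    (hD : ∀ x ∈ D, ∀ y : JI L, (y : L) ≤ (x : L) → y ∈ D) :
    lset (D.sup Subtype.val) = D := by
  apply Finset.Subset.antisymm
  · intro p hp
    obtain ⟨d, hdD, hle⟩ := joinIrred_le_finset_sup hd (mem_lset.mp hp)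
    exact hD d hdD p hle
  · intro d hdD
    exact mem_lset.mpr (Finset.le_sup (f := Subtype.val) hdD)

end Dist

noncomputable def sig (q : L) : (JI L ⊕ JI L) →₀ ℕ :=
  ∑ p : JI L, Finsupp.single (if (p : L) ≤ q then Sum.inl p else Sum.inr p) 1

lemma prod_X_single {F : Type*} [Field F] (g : JI L → (JI L ⊕ JI L)) (s : Finset (JI L)) :
    (∏ p ∈ s, (X (g p) : MvPolynomial (JI L ⊕ JI L) F)) =
      monomial (∑ p ∈ s, Finsupp.single (g p) 1) 1 := by
  induction s using Finset.induction with
  | empty => simp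
  | insert a s' h ih =>
    rw [Finset.prod_insert h, Finset.sum_insert h, ih, ← pow_one (X (g a)),
      X_pow_eq_monomial, monomial_mul, one_mul]

lemma uMon_eq (F : Type*) [Field F] (q : L) : uMon F q = monomial (sig q) (1 : F) := by
  rw [uMon, sig, ← prod_X_single]
  apply Finset.prod_congr rfl
  intro p _
  split_ifs <;> rfl

lemma sig_apply_inl (q : L) (p : JI L) :
    sig q (Sum.inl p) = if (p : L) ≤ q then 1 else 0 := by
  rw [sig, Finsupp.finset_sum_apply, Finset.sum_eq_single p]
  · split_ifs with h <;> simp [Finsupp.single_apply]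
  · intro b _ hbp
    split_ifs with h <;> simp [Finsupp.single_apply, hbp]
  · simp

lemma sig_apply_inr (q : L) (p : JI L) :
    sig q (Sum.inr p) = if (p : L) ≤ q then 0 else 1 := by
  rw [sig, Finsupp.finset_sum_apply, Finset.sum_eq_single p]
  · split_ifs with h <;> simp [Finsupp.single_apply]
  · intro b _ hbp
    split_ifs with h <;> simp [Finsupp.single_apply, hbp]
  · simp

lemma tau_apply_inl (c b : L) (p : JI L) :
    (sig c - sig b) (Sum.inl p) = if p ∈ lset c ∧ p ∉ lset b then 1 else 0 := by
  rw [Finsupp.tsub_apply, sig_apply_inl, sig_apply_inl]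
  by_cases h1 : (p : L) ≤ c <;> by_cases h2 : (p : L) ≤ b <;>
    simp [h1, h2, mem_lset]

lemma tau_apply_inr (c b : L) (p : JI L) :
    (sig c - sig b) (Sum.inr p) = if p ∈ lset b ∧ p ∉ lset c then 1 else 0 := by
  rw [Finsupp.tsub_apply, sig_apply_inr, sig_apply_inr]
  by_cases h1 : (p : L) ≤ c <;> by_cases h2 : (p : L) ≤ b <;>
    simp [h1, h2, mem_lset]

lemma tau_eq_zero {c b : L} (h : sig c - sig b = 0) : c = b := by
  apply lset_inj
  apply Finset.Subset.antisymm
  · intro p hp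
    by_contra hpb
    have := tau_apply_inl c b p
    rw [h, if_pos ⟨hp, hpb⟩] at this
    simp at this
  · intro p hp
    by_contra hpc
    have := tau_apply_inr c b p
    rw [h, if_pos ⟨hp, hpc⟩] at this
    simp at this

lemma tau_eq_single_inr_iff {c b : L} {p : JI L} :
    sig c - sig b = Finsupp.single (Sum.inr p) 1 ↔
      (lset c = (lset b).erase p ∧ p ∈ lset b) := by
  constructor
  · intro h
    have hsub : lset c ⊆ lset b := by
      intro p' hp'
      by_contra hpb
      have := tau_apply_inl c b p'
      rw [h, if_pos ⟨hp', hpb⟩, Finsupp.single_apply] at this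
      simp at this
    have hdiff : ∀ p' : JI L, (p' ∈ lset b ∧ p' ∉ lset c) ↔ p' = p := by
      intro p'
      have := tau_apply_inr c b p'
      rw [h, Finsupp.single_apply] at this
      constructor
      · intro hh
        rw [if_pos hh] at this
        by_contra hne
        simp [(by simpa [eq_comm] using hne : ¬ Sum.inr p = Sum.inr p')] at this
      · intro hh
        subst hh
        by_contra hcon
        rw [if_neg hcon] at this
        simp at this
    have hpb : p ∈ lset b ∧ p ∉ lset c := (hdiff p).mpr rfl
    refine ⟨?_, hpb.1⟩
    ext p'
    simp only [Finset.mem_erase]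
    constructor
    · intro hp'
      refine ⟨fun he => ((hdiff p').mp ?_ ▸ hpb.2) hp', hsub hp'⟩
      · exact ⟨hsub hp', he ▸ hpb.2⟩
    · rintro ⟨hne, hpb'⟩
      by_contra hpc
      exact hne ((hdiff p').mp ⟨hpb', hpc⟩)
  · rintro ⟨hc, hpb⟩
    ext v
    rcases v with p' | p'
    · rw [tau_apply_inl, Finsupp.single_apply]
      have : ¬ (p' ∈ lset c ∧ p' ∉ lset b) := by
        rintro ⟨h1, h2⟩
        exact h2 (Finset.mem_erase.mp (hc ▸ h1)).2
      simp [this]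
    · rw [tau_apply_inr, Finsupp.single_apply]
      by_cases he : p' = p
      · subst he
        have : p' ∉ lset c := by rw [hc]; exact Finset.notMem_erase _ _
        simp [hpb, this]
      · have : ¬ (p' ∈ lset b ∧ p' ∉ lset c) := by
          rintro ⟨h1, h2⟩
          exact h2 (hc ▸ Finset.mem_erase.mpr ⟨he, h1⟩)
        simp [this, Ne.symm he]

lemma tau_eq_single_inl_iff {c b : L} {p : JI L} :
    sig c - sig b = Finsupp.single (Sum.inl p) 1 ↔
      (lset c = insert p (lset b) ∧ p ∉ lset b) := by
  constructor
  · intro h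
    have hsub : lset b ⊆ lset c := by
      intro p' hp'
      by_contra hpc
      have := tau_apply_inr c b p'
      rw [h, if_pos ⟨hp', hpc⟩] at this
      simp [Finsupp.single_apply] at this
    have hdiff : ∀ p' : JI L, (p' ∈ lset c ∧ p' ∉ lset b) ↔ p' = p := by
      intro p'
      have := tau_apply_inl c b p'
      rw [h, Finsupp.single_apply] at this
      constructor
      · intro hh
        rw [if_pos hh] at this
        by_contra hne
        simp [(by simpa [eq_comm] using hne : ¬ Sum.inl p = Sum.inl p')] at this
      · intro hh
        subst hh
        by_contra hcon
        rw [if_neg hcon] at this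
        simp at this
    have hp : p ∈ lset c ∧ p ∉ lset b := (hdiff p).mpr rfl
    refine ⟨?_, hp.2⟩
    ext p'
    simp only [Finset.mem_insert]
    constructor
    · intro hp'
      by_cases hb : p' ∈ lset b
      · exact Or.inr hb
      · exact Or.inl ((hdiff p').mp ⟨hp', hb⟩)
    · rintro (he | hb)
      · exact he ▸ hp.1
      · exact hsub hb
  · rintro ⟨hc, hpb⟩
    ext v
    rcases v with p' | p'
    · rw [tau_apply_inl, Finsupp.single_apply]
      by_cases he : p' = p
      · subst he
        have : p' ∈ lset c := hc ▸ Finset.mem_insert_self _ _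
        simp [this, hpb]
      · have hnc : ¬ (p' ∈ lset c ∧ p' ∉ lset b) := by
          rintro ⟨h1, h2⟩
          rcases Finset.mem_insert.mp (hc ▸ h1) with h | h
          · exact he h
          · exact h2 h
        simp [hnc, Ne.symm he]
    · rw [tau_apply_inr, Finsupp.single_apply]
      have hnc : ¬ (p' ∈ lset b ∧ p' ∉ lset c) := by
        rintro ⟨h1, h2⟩
        exact h2 (hc ▸ Finset.mem_insert_of_mem h1)
      simp [hnc]


def CondC (L : Type*) [Fintype L] [Lattice L] [BoundedOrder L] : Prop :=
  ∃ e : Fin (Fintype.card L) ≃ L, ∀ i j : Fin (Fintype.card L), j < i →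
    ∃ k, k < i ∧ ∃ p : JI L,
      ((lset (e k) = (lset (e i)).erase p ∧ p ∈ lset (e i) ∧ p ∉ lset (e j)) ∨
       (lset (e k) = insert p (lset (e i)) ∧ p ∉ lset (e i) ∧ p ∈ lset (e j)))

variable (F : Type*) [Field F]

lemma mem_span_uMon_iff (e : Fin (Fintype.card L) ≃ L) (i : Fin (Fintype.card L))
    (x : MvPolynomial (JI L ⊕ JI L) F) :
    x ∈ Ideal.span ((fun j => uMon F (e j)) '' {j | j < i}) ↔
      ∀ m ∈ x.support, ∃ j, j < i ∧ sig (e j) ≤ m := by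
  have himg : (fun j => uMon F (e j)) '' {j | j < i} =
      (fun s => monomial s (1:F)) '' ((fun j => sig (e j)) '' {j | j < i}) := by
    rw [Set.image_image]
    exact Set.image_congr fun j _ => uMon_eq F (e j)
  rw [himg, mem_ideal_span_monomial_image]
  constructor
  · intro h m hm
    obtain ⟨si, hsi, hle⟩ := h m hm
    obtain ⟨j, hj, rfl⟩ := hsi
    exact ⟨j, hj, hle⟩
  · intro h m hm
    obtain ⟨j, hj, hle⟩ := h m hm
    exact ⟨sig (e j), ⟨j, hj, rfl⟩, hle⟩

lemma le_single_cases {m : (JI L ⊕ JI L) →₀ ℕ} {t : JI L ⊕ JI L}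
    (h : m ≤ Finsupp.single t 1) : m = 0 ∨ m = Finsupp.single t 1 := by
  by_cases h0 : m t = 0
  · left
    ext v
    by_cases hv : v = t
    · simp [hv, h0]
    · have hle : m v ≤ Finsupp.single t 1 v := Finsupp.le_def.mp h v
      rw [Finsupp.single_apply, if_neg (fun hh => hv hh.symm)] at hle
      simpa using hle
  · right
    ext v
    by_cases hv : v = t
    · have hle : m v ≤ Finsupp.single t 1 v := Finsupp.le_def.mp h v
      rw [Finsupp.single_apply, if_pos hv.symm] at hle
      rw [Finsupp.single_apply, if_pos hv.symm]
      subst hv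
      omega
    · have hle : m v ≤ Finsupp.single t 1 v := Finsupp.le_def.mp h v
      rw [Finsupp.single_apply, if_neg (fun hh => hv hh.symm)] at hle
      rw [Finsupp.single_apply, if_neg (fun hh => hv hh.symm)]
      omega

lemma hlq_iff_condC : HasLinearQuotientsHL L F ↔ CondC L := by
  constructor
  · rintro ⟨e, he⟩
    refine ⟨e, fun i j hj => ?_⟩
    obtain ⟨T, hT⟩ := he i
    have hji : j ≠ i := ne_of_lt hj
    have hτj0 : sig (e j) - sig (e i) ≠ 0 := fun h =>
      hji (e.injective (tau_eq_zero h))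
    have h1 : (monomial (sig (e j) - sig (e i)) (1:F)) ∈
        Submodule.colon (Ideal.span ((fun j => uMon F (e j)) '' {j | j < i}))
          (Ideal.span {uMon F (e i)}) := by
      rw [Ideal.mem_colon_span_singleton, uMon_eq, monomial_mul, one_mul, mem_span_uMon_iff]
      intro m hm
      rw [support_monomial, if_neg one_ne_zero, Finset.mem_singleton] at hm
      subst hm
      exact ⟨j, hj, le_tsub_add⟩
    rw [hT, mem_ideal_span_X_image] at h1
    obtain ⟨t, htT, htne⟩ := h1 (sig (e j) - sig (e i))
      (by rw [support_monomial, if_neg one_ne_zero]; exact Finset.mem_singleton_self _)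
    have h2 : (X t : MvPolynomial (JI L ⊕ JI L) F) ∈
        Ideal.span ((fun s => (X s : MvPolynomial (JI L ⊕ JI L) F)) '' T) :=
      Ideal.subset_span (Set.mem_image_of_mem _ htT)
    rw [← hT, Ideal.mem_colon_span_singleton, uMon_eq, ← pow_one (X t), X_pow_eq_monomial,
      monomial_mul, one_mul, mem_span_uMon_iff] at h2
    obtain ⟨k, hk, hkle⟩ := h2 (Finsupp.single t 1 + sig (e i))
      (by rw [support_monomial, if_neg one_ne_zero]; exact Finset.mem_singleton_self _)
    have hτk : sig (e k) - sig (e i) ≤ Finsupp.single t 1 := tsub_le_iff_right.mpr hkle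
    have hki : k ≠ i := ne_of_lt hk
    rcases le_single_cases hτk with h0 | hsingle
    · exact absurd (e.injective (tau_eq_zero h0)) hki
    have htj : (1:ℕ) ≤ (sig (e j) - sig (e i)) t := Nat.one_le_iff_ne_zero.mpr htne
    rcases t with p | p
    · rw [tau_apply_inl] at htj
      have hmem : p ∈ lset (e j) ∧ p ∉ lset (e i) := by
        by_contra hcon
        rw [if_neg hcon] at htj
        omega
      obtain ⟨hins, hni⟩ := tau_eq_single_inl_iff.mp hsingle
      exact ⟨k, hk, p, Or.inr ⟨hins, hni, hmem.1⟩⟩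
    · rw [tau_apply_inr] at htj
      have hmem : p ∈ lset (e i) ∧ p ∉ lset (e j) := by
        by_contra hcon
        rw [if_neg hcon] at htj
        omega
      obtain ⟨hers, hpi⟩ := tau_eq_single_inr_iff.mp hsingle
      exact ⟨k, hk, p, Or.inl ⟨hers, hpi, hmem.2⟩⟩
  · rintro ⟨e, he⟩
    refine ⟨e, fun i => ?_⟩
    refine ⟨{t | ∃ k, k < i ∧ sig (e k) - sig (e i) = Finsupp.single t 1}, ?_⟩
    apply le_antisymm
    · intro f hf
      rw [Ideal.mem_colon_span_singleton, uMon_eq] at hf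
      rw [mem_ideal_span_X_image]
      intro m hm
      have hsupp : m + sig (e i) ∈ (f * monomial (sig (e i)) (1:F)).support := by
        rw [mem_support_iff, coeff_mul_monomial, mul_one]
        exact mem_support_iff.mp hm
      obtain ⟨jj, hjj, hle⟩ := (mem_span_uMon_iff F e i _).mp hf _ hsupp
      have hτ : sig (e jj) - sig (e i) ≤ m := tsub_le_iff_right.mpr hle
      obtain ⟨k, hk, p, hcase⟩ := he i jj hjj
      rcases hcase with ⟨h1, h2, h3⟩ | ⟨h1, h2, h3⟩
      · refine ⟨Sum.inr p, ⟨k, hk, tau_eq_single_inr_iff.mpr ⟨h1, h2⟩⟩, ?_⟩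
        have h4 : (sig (e jj) - sig (e i)) (Sum.inr p) = 1 := by
          rw [tau_apply_inr, if_pos ⟨h2, h3⟩]
        have h5 := Finsupp.le_def.mp hτ (Sum.inr p)
        omega
      · refine ⟨Sum.inl p, ⟨k, hk, tau_eq_single_inl_iff.mpr ⟨h1, h2⟩⟩, ?_⟩
        have h4 : (sig (e jj) - sig (e i)) (Sum.inl p) = 1 := by
          rw [tau_apply_inl, if_pos ⟨h3, h2⟩]
        have h5 := Finsupp.le_def.mp hτ (Sum.inl p)
        omega
    · rw [Ideal.span_le]
      rintro _ ⟨t, ⟨k, hk, hks⟩, rfl⟩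
      show (X t : MvPolynomial (JI L ⊕ JI L) F) ∈
        Submodule.colon (Ideal.span ((fun j => uMon F (e j)) '' {j | j < i}))
          (Ideal.span {uMon F (e i)})
      rw [Ideal.mem_colon_span_singleton, uMon_eq, ← pow_one (X t),
        X_pow_eq_monomial, monomial_mul, one_mul, mem_span_uMon_iff]
      intro m hm
      rw [support_monomial, if_neg one_ne_zero, Finset.mem_singleton] at hm
      subst hm
      exact ⟨k, hk, tsub_le_iff_right.mp hks.le⟩



lemma lt_of_lset_ssubset {x y : L} (h : lset x ⊂ lset y) : x < y :=
  lt_of_le_of_ne (le_of_lset_subset h.subset) (fun he => h.ne (he ▸ rfl))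

lemma condC_of_dist (hd : ∀ p q r : L, p ⊓ (q ⊔ r) = (p ⊓ q) ⊔ (p ⊓ r)) : CondC L := by
  classical
  let e₀ : Fin (Fintype.card L) ≃ L := (Fintype.equivFin L).symm
  let key : Fin (Fintype.card L) → ℕ := fun i => (lset (e₀ i)).card
  let e : Fin (Fintype.card L) ≃ L := (Tuple.sort key).trans e₀
  have hmono : ∀ i j : Fin (Fintype.card L), i ≤ j →
      (lset (e i)).card ≤ (lset (e j)).card := fun i j h =>
    Tuple.monotone_sort key h
  refine ⟨e, fun i j hj => ?_⟩
  have hij : e j ≠ e i := fun h => (ne_of_lt hj) (e.injective h)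
  have hcard : (lset (e j)).card ≤ (lset (e i)).card := hmono j i hj.le
  have hne : (lset (e i) \ lset (e j)).Nonempty := by
    rw [Finset.sdiff_nonempty]
    intro hsub
    exact hij (lset_inj (Finset.eq_of_subset_of_card_le hsub hcard)).symm
  obtain ⟨p, hp, hmax⟩ : ∃ p ∈ lset (e i) \ lset (e j), ∀ x ∈ lset (e i) \ lset (e j), ¬ p < x :=
    let ⟨p, hp⟩ := Finset.exists_maximal hne
    ⟨p, hp.1, fun x hx hlt => lt_irrefl _ (lt_of_lt_of_le hlt (hp.2 hx hlt.le))⟩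
  have hpi : p ∈ lset (e i) := (Finset.mem_sdiff.mp hp).1
  have hpj : p ∉ lset (e j) := (Finset.mem_sdiff.mp hp).2
  have hdown : ∀ x ∈ (lset (e i)).erase p, ∀ y : JI L, (y : L) ≤ (x : L) →
      y ∈ (lset (e i)).erase p := by
    intro x hx y hyx
    obtain ⟨hxp, hxi⟩ := Finset.mem_erase.mp hx
    have hyi : y ∈ lset (e i) := mem_lset.mpr (hyx.trans (mem_lset.mp hxi))
    refine Finset.mem_erase.mpr ⟨fun hyp => ?_, hyi⟩
    subst hyp
    have hxd : x ∈ lset (e i) \ lset (e j) := by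
      refine Finset.mem_sdiff.mpr ⟨hxi, fun hxj => ?_⟩
      exact hpj (mem_lset.mpr (hyx.trans (mem_lset.mp hxj)))
    exact hmax x hxd (lt_of_le_of_ne (Subtype.coe_le_coe.mp hyx) (Ne.symm hxp))
  have hlc : lset (((lset (e i)).erase p).sup Subtype.val) = (lset (e i)).erase p :=
    lset_sup_of_downset hd hdown
  set c := ((lset (e i)).erase p).sup Subtype.val with hc
  have hcardD : ((lset (e i)).erase p).card + 1 = (lset (e i)).card := by
    rw [Finset.card_erase_of_mem hpi]
    have : 1 ≤ (lset (e i)).card := Finset.card_pos.mpr ⟨p, hpi⟩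
    omega
  have hki : e.symm c < i := by
    by_contra hcon
    push_neg at hcon
    have := hmono i (e.symm c) hcon
    rw [e.apply_symm_apply, hlc] at this
    omega
  exact ⟨e.symm c, hki, p, Or.inl ⟨by rw [e.apply_symm_apply, hlc], hpi, hpj⟩⟩

lemma cover_card (hC : CondC L) {a b : L} (hab : a ⋖ b) :
    (lset b).card = (lset a).card + 1 := by
  obtain ⟨e, he⟩ := hC
  have hne : e.symm a ≠ e.symm b := fun h => hab.lt.ne (by
    have := congrArg e h
    rwa [e.apply_symm_apply, e.apply_symm_apply] at this)
  rcases lt_or_gt_of_ne hne with h | h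
  · obtain ⟨k, hk, p, hcase⟩ := he (e.symm b) (e.symm a) h
    rw [e.apply_symm_apply, e.apply_symm_apply] at hcase
    rcases hcase with ⟨h1, h2, h3⟩ | ⟨h1, h2, h3⟩
    · have hsub : lset a ⊆ (lset b).erase p :=
        Finset.subset_erase.mpr ⟨lset_mono hab.le, h3⟩
      have hekb : e k < b := lt_of_lset_ssubset (h1 ▸ Finset.erase_ssubset h2)
      have halek : a ≤ e k := le_of_lset_subset (by rw [h1]; exact hsub)
      rcases halek.lt_or_eq with hlt | heq
      · exact absurd hekb (hab.2 hlt)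
      · rw [← heq] at h1
        rw [h1, Finset.card_erase_of_mem h2]
        have : 1 ≤ (lset b).card := Finset.card_pos.mpr ⟨p, h2⟩
        omega
    · exact absurd (lset_mono hab.le h3) h2
  · obtain ⟨k, hk, p, hcase⟩ := he (e.symm a) (e.symm b) h
    rw [e.apply_symm_apply, e.apply_symm_apply] at hcase
    rcases hcase with ⟨h1, h2, h3⟩ | ⟨h1, h2, h3⟩
    · exact absurd (lset_mono hab.le h2) h3
    · have hac : a < e k := lt_of_lset_ssubset (h1 ▸ Finset.ssubset_insert h2)
      have hpc : (p : L) ≤ e k := mem_lset.mp (by rw [h1]; exact Finset.mem_insert_self _ _)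
      have hpb : (p : L) ≤ b := mem_lset.mp h3
      have hinf : a < e k ⊓ b := by
        refine lt_of_le_of_ne (le_inf hac.le hab.le) (fun heq => ?_)
        exact (mem_lset.not.mp h2) (heq ▸ le_inf hpc hpb)
      have hbc : b ≤ e k := by
        rcases inf_le_right.lt_or_eq (a := e k ⊓ b) (b := b) with hlt | heq
        · exact absurd hlt (hab.2 hinf)
        · exact heq ▸ inf_le_left
      have hsub : lset b ⊆ insert p (lset a) := by rw [← h1]; exact lset_mono hbc
      have h4 : (lset b).card ≤ (lset a).card + 1 :=
        le_trans (Finset.card_le_card hsub) (le_of_eq (Finset.card_insert_of_notMem h2))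
      have h5 : (lset a).card < (lset b).card := Finset.card_lt_card (lset_ssubset hab.lt)
      omega

lemma exists_cov_le {c x : L} (h : c < x) : ∃ z, c ⋖ z ∧ z ≤ x := by
  classical
  have hne : (Finset.univ.filter (fun w => c < w ∧ w ≤ x)).Nonempty :=
    ⟨x, by simp [h]⟩
  obtain ⟨z, hz, hmin⟩ : ∃ z ∈ Finset.univ.filter (fun w => c < w ∧ w ≤ x),
      ∀ w ∈ Finset.univ.filter (fun w => c < w ∧ w ≤ x), ¬ w < z :=
    let ⟨z, hz⟩ := Finset.exists_minimal hne
    ⟨z, hz.1, fun w hw hlt => lt_irrefl _ (lt_of_lt_of_le hlt (hz.2 hw hlt.le))⟩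
  rw [Finset.mem_filter] at hz
  refine ⟨z, ⟨hz.2.1, fun w hcw hwz => ?_⟩, hz.2.2⟩
  exact hmin w (Finset.mem_filter.mpr ⟨Finset.mem_univ _, hcw, hwz.le.trans hz.2.2⟩) hwz

lemma submod_aux (husm : ∀ a b : L, a ⊓ b ⋖ b → a ⋖ a ⊔ b) (hC : CondC L) :
    ∀ (n : ℕ) (x y : L), (lset x).card - (lset (x ⊓ y)).card ≤ n →
      (lset (x ⊔ y)).card + (lset (x ⊓ y)).card ≤ (lset x).card + (lset y).card := by
  intro n
  induction n with
  | zero =>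
    intro x y hn
    have hsub : lset (x ⊓ y) ⊆ lset x := lset_mono inf_le_left
    have hcard : (lset x).card ≤ (lset (x ⊓ y)).card := by
      have := Finset.card_le_card hsub
      omega
    have heq : x ⊓ y = x := lset_inj ((Finset.eq_of_subset_of_card_le hsub hcard).symm) |>.symm
    have hxy : x ≤ y := inf_eq_left.mp heq
    rw [sup_eq_right.mpr hxy, heq]
    omega
  | succ n ih =>
    intro x y hn
    by_cases hxy : x ⊓ y = x
    · have hle : x ≤ y := inf_eq_left.mp hxy
      rw [sup_eq_right.mpr hle, hxy]
      omega
    · have hlt : x ⊓ y < x := lt_of_le_of_ne inf_le_left hxy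
      obtain ⟨z, hz, hzx⟩ := exists_cov_le hlt
      have hyz : y ⊓ z = x ⊓ y :=
        le_antisymm (le_inf (inf_le_right.trans hzx) inf_le_left)
          (le_inf inf_le_right hz.le)
      have hcov1 : y ⊓ z ⋖ z := hyz ▸ hz
      have hcovy : y ⋖ y ⊔ z := husm y z hcov1
      have hzle : z ≤ x ⊓ (y ⊔ z) := le_inf hzx le_sup_right
      have hcz : (lset z).card = (lset (x ⊓ y)).card + 1 := cover_card hC hz
      have hmono1 : (lset z).card ≤ (lset (x ⊓ (y ⊔ z))).card :=
        Finset.card_le_card (lset_mono hzle)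
      have hm : (lset x).card - (lset (x ⊓ (y ⊔ z))).card ≤ n := by omega
      have hih := ih x (y ⊔ z) hm
      have hsup : x ⊔ (y ⊔ z) = x ⊔ y := by
        rw [← sup_assoc, sup_comm x y, sup_assoc, sup_eq_left.mpr hzx, sup_comm y x]
      rw [hsup] at hih
      have hcy : (lset (y ⊔ z)).card = (lset y).card + 1 := cover_card hC hcovy
      omega

lemma lset_sup_eq (husm : ∀ a b : L, a ⊓ b ⋖ b → a ⋖ a ⊔ b) (hC : CondC L)
    (x y : L) : lset (x ⊔ y) = lset x ∪ lset y := by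
  classical
  have hsub : lset x ∪ lset y ⊆ lset (x ⊔ y) :=
    Finset.union_subset (lset_mono le_sup_left) (lset_mono le_sup_right)
  have h1 : (lset x ∪ lset y).card + (lset x ∩ lset y).card
      = (lset x).card + (lset y).card := Finset.card_union_add_card_inter _ _
  have h2 : lset x ∩ lset y = lset (x ⊓ y) := (lset_inf x y).symm
  have h3 := submod_aux husm hC ((lset x).card - (lset (x ⊓ y)).card) x y le_rfl
  rw [h2] at h1
  refine (Finset.eq_of_subset_of_card_le hsub ?_).symm
  omega

lemma dist_of_condC (husm : ∀ a b : L, a ⊓ b ⋖ b → a ⋖ a ⊔ b) (hC : CondC L) :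
    ∀ p q r : L, p ⊓ (q ⊔ r) = (p ⊓ q) ⊔ (p ⊓ r) := by
  classical
  intro p q r
  apply lset_inj
  rw [lset_inf, lset_sup_eq husm hC, lset_sup_eq husm hC, lset_inf, lset_inf,
    Finset.inter_union_distrib_left]

end HLQAux

/-- Corollary 1.4: if `L` is a finite upper semimodular lattice, then `H_L` has linear
quotients (equivalently, a linear resolution) if and only if `L` is distributive. -/
theorem stmt9 {L : Type*} [Fintype L] [Lattice L] [BoundedOrder L]
    (husm : ∀ a b : L, a ⊓ b ⋖ b → a ⋖ a ⊔ b)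
    (F : Type*) [Field F] :
    HasLinearQuotientsHL L F ↔ ∀ p q r : L, p ⊓ (q ⊔ r) = (p ⊓ q) ⊔ (p ⊓ r) := by
  rw [HLQAux.hlq_iff_condC F]
  exact ⟨HLQAux.dist_of_condC husm, HLQAux.condC_of_dist⟩
end

section
/- Let L be a meet-distributive meet-semilattice and let q be a lower neighbor of p ∈ L (i.e., p covers q). Then the set ℓ(p)∖ℓ(q) consists of exactly one element. -/
/-- `ℓ(q) = {p ∈ P : p ≤ q}`, where `P` is the set of join-irreducible elements. -/
def ell {L : Type*} [Preorder L] (q : L) : Set L := {p | JoinIrred p ∧ p ≤ q}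

/-- The interval `[x,y]` is a Boolean lattice (of some rank `n`). -/
def IsBooleanInterval {L : Type*} [Preorder L] (x y : L) : Prop :=
  ∃ n : ℕ, Nonempty ((Set.Icc x y) ≃o Set (Fin n))

/-- A meet-semilattice is *meet-distributive* if each interval `[x,y]` such that `x` is the
meet of the lower neighbors of `y` in this interval is Boolean. -/
def MeetDistributive (L : Type*) [SemilatticeInf L] : Prop :=
  ∀ x y : L, x ≤ y → IsGLB {z | x ≤ z ∧ z ⋖ y} x → IsBooleanInterval x y

/-!
Let `x` be the meet of the lower covers of `p`. Meet-distributivity makes `[x, p]` Boolean, with the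
lower covers of `p` as its coatoms; hence distinct lower covers `c ≠ d` of `p` satisfy `c ⊓ d ⋖ d`,
and `c ⊓ z ≠ d ⊓ z` for a third one `z`.

By induction on `p`, a join-irreducible `r ≤ p` lies below all lower covers of `p` but at most one:
if it avoided `c ≠ d`, then `r < p` (a join-irreducible has at most one lower cover), so `r ≤ z ⋖ p`
for some `z`, and `r` avoids the two distinct lower covers `c ⊓ z` and `d ⊓ z` of `z`.

Now let `r, s ∈ ℓ(p) \ ℓ(q)`. If `p` has a lower cover `c ≠ q`, then `r, s ≤ c`, so
`r, s ∈ ℓ(c) \ ℓ(q ⊓ c)` with `q ⊓ c ⋖ c`, and induction applies; otherwise `r = s = p`.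
Finally `ℓ(p) \ ℓ(q)` is nonempty because `p` is the join of `ℓ(p)`.
-/

theorem IsCoatom.inf_covBy {β : Type*} [Lattice β] [OrderTop β] [IsLowerModularLattice β]
    {a b : β} (ha : IsCoatom a) (hb : IsCoatom b) (hab : a ≠ b) : a ⊓ b ⋖ b :=
  inf_covBy_of_covBy_sup_left (by rw [ha.sup_eq_top_of_ne hb hab]; exact covBy_top_iff.2 ha)

theorem IsCoatom.inf_ne_inf {β : Type*} [DistribLattice β] [OrderTop β] {a b c : β}
    (ha : IsCoatom a) (hb : IsCoatom b) (hc : IsCoatom c) (hab : a ≠ b) (hac : a ≠ c) :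
    a ⊓ c ≠ b ⊓ c := fun h =>
  ha.1 <| calc
    a = a ⊔ a ⊓ c := sup_inf_self.symm
    _ = a ⊔ b ⊓ c := by rw [h]
    _ = ⊤ := by
      rw [sup_inf_left, ha.sup_eq_top_of_ne hb hab, ha.sup_eq_top_of_ne hc hac, top_inf_eq]

theorem not_joinIrred_of_covBy_of_covBy {L : Type*} [SemilatticeInf L] {c d p : L} (hc : c ⋖ p)
    (hd : d ⋖ p) (hcd : c ≠ d) : ¬ JoinIrred p := by
  refine not_not.2 ⟨fun _ => le_of_lt, fun u hu => ?_⟩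
  by_contra hpu
  have hlt : u ⊓ p < p := inf_lt_right.2 hpu
  have hc' : c = u ⊓ p := (le_inf (hu hc.lt) hc.le).eq_of_not_lt fun h => hc.2 h hlt
  have hd' : d = u ⊓ p := (le_inf (hu hd.lt) hd.le).eq_of_not_lt fun h => hd.2 h hlt
  exact hcd (hc'.trans hd'.symm)

section ell

variable {L : Type*} [Preorder L] [WellFoundedLT L]

theorem isLUB_ell (p : L) : IsLUB (ell p) p := by
  induction p using WellFoundedLT.induction with
  | _ p ih =>
  refine ⟨fun _ ht => ht.2, fun u hu => ?_⟩
  by_cases hp : JoinIrred p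
  · exact hu ⟨hp, le_rfl⟩
  · exact (not_not.1 hp).2 fun z hz => (ih z hz).2 fun t ht => hu ⟨ht.1, ht.2.trans hz.le⟩

theorem ell_diff_nonempty {p q : L} (hqp : q < p) : (ell p \ ell q).Nonempty := by
  by_contra h
  rw [Set.not_nonempty_iff_eq_empty, Set.sdiff_eq_empty] at h
  exact hqp.not_ge ((isLUB_ell p).2 fun _ ht => (h ht).2)

end ell

section BooleanInterval

variable {L : Type*} [SemilatticeInf L] {x p c d z : L}

theorem Set.Icc.coe_covBy_coe {a b : Set.Icc x p} : (a : L) ⋖ b ↔ a ⋖ b :=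
  Set.OrdConnected.apply_covBy_apply_iff (OrderEmbedding.subtype (· ∈ Set.Icc x p)) (by
    rw [OrderEmbedding.coe_subtype, Subtype.range_coe]; exact Set.ordConnected_Icc)

variable {β : Type*} [DistribLattice β] [OrderTop β]

theorem OrderIso.isCoatom_apply_of_covBy (e : Set.Icc x p ≃o β) (hxc : x ≤ c) (hc : c ⋖ p) :
    IsCoatom (e ⟨c, hxc, hc.le⟩) := by
  have hp : e ⟨p, hxc.trans hc.le, le_rfl⟩ = ⊤ :=
    top_le_iff.1 (e.symm_apply_le.1 (e.symm ⊤).2.2)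
  rw [← covBy_top_iff, ← hp, apply_covBy_apply_iff, ← Set.Icc.coe_covBy_coe]
  exact hc

theorem OrderIso.inf_covBy_of_covBy (e : Set.Icc x p ≃o β) (hxc : x ≤ c) (hxd : x ≤ d)
    (hc : c ⋖ p) (hd : d ⋖ p) (hcd : c ≠ d) : c ⊓ d ⋖ d := by
  have h := (e.isCoatom_apply_of_covBy hxc hc).inf_covBy (e.isCoatom_apply_of_covBy hxd hd)
    (e.injective.ne (Subtype.coe_ne_coe.1 hcd))
  rwa [← map_inf, apply_covBy_apply_iff, ← Set.Icc.coe_covBy_coe] at h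

theorem OrderIso.inf_ne_inf_of_covBy (e : Set.Icc x p ≃o β) (hxc : x ≤ c) (hxd : x ≤ d)
    (hxz : x ≤ z) (hc : c ⋖ p) (hd : d ⋖ p) (hz : z ⋖ p) (hcd : c ≠ d) (hcz : c ≠ z) :
    c ⊓ z ≠ d ⊓ z := by
  intro h
  refine (e.isCoatom_apply_of_covBy hxc hc).inf_ne_inf (e.isCoatom_apply_of_covBy hxd hd)
    (e.isCoatom_apply_of_covBy hxz hz) (e.injective.ne (Subtype.coe_ne_coe.1 hcd))
    (e.injective.ne (Subtype.coe_ne_coe.1 hcz)) ?_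
  rw [← map_inf, ← map_inf]
  exact congrArg e (Subtype.ext h)

end BooleanInterval

namespace MeetDistributive

variable {L : Type*} [SemilatticeInf L] [Finite L] {p q c d z : L}

theorem exists_orderIso_Icc (hL : MeetDistributive L) (hc : c ⋖ p) :
    ∃ x, (∀ z, z ⋖ p → x ≤ z) ∧ ∃ n, Nonempty (Set.Icc x p ≃o Set (Fin n)) := by
  have hfin : {z | z ⋖ p}.Finite := Set.toFinite _
  set x := hfin.toFinset.inf' ⟨c, hfin.mem_toFinset.2 hc⟩ id
  have hlb : ∀ z, z ⋖ p → x ≤ z := fun z hz => Finset.inf'_le id (hfin.mem_toFinset.2 hz)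
  have hglb : IsGLB {z | x ≤ z ∧ z ⋖ p} x := ⟨fun _ hz => hz.1, fun _ hw =>
    Finset.le_inf' _ _ fun z hz => hw ⟨hlb z (hfin.mem_toFinset.1 hz), hfin.mem_toFinset.1 hz⟩⟩
  exact ⟨x, hlb, hL x p ((hlb c hc).trans hc.le) hglb⟩

theorem inf_covBy_of_covBy (hL : MeetDistributive L) (hc : c ⋖ p) (hd : d ⋖ p) (hcd : c ≠ d) :
    c ⊓ d ⋖ d := by
  obtain ⟨x, hx, n, ⟨e⟩⟩ := hL.exists_orderIso_Icc hc
  exact e.inf_covBy_of_covBy (hx c hc) (hx d hd) hc hd hcd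

theorem inf_ne_inf_of_covBy (hL : MeetDistributive L) (hc : c ⋖ p) (hd : d ⋖ p) (hz : z ⋖ p)
    (hcd : c ≠ d) (hcz : c ≠ z) : c ⊓ z ≠ d ⊓ z := by
  obtain ⟨x, hx, n, ⟨e⟩⟩ := hL.exists_orderIso_Icc hc
  exact e.inf_ne_inf_of_covBy (hx c hc) (hx d hd) (hx z hz) hc hd hz hcd hcz

theorem le_or_le_of_joinIrred (hL : MeetDistributive L) {r : L} (hc : c ⋖ p) (hd : d ⋖ p)
    (hcd : c ≠ d) (hr : JoinIrred r) (hrp : r ≤ p) : r ≤ c ∨ r ≤ d := by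
  induction p using WellFoundedLT.induction generalizing c d with
  | _ p ih =>
  by_contra! h
  obtain hrp | rfl := hrp.lt_or_eq
  · obtain ⟨z, hrz, hz⟩ := exists_le_covBy_of_lt hrp
    have hcz : c ≠ z := fun hcz => h.1 (hcz ▸ hrz)
    have hdz : d ≠ z := fun hdz => h.2 (hdz ▸ hrz)
    obtain h' | h' := ih z hz.lt (hL.inf_covBy_of_covBy hc hz hcz) (hL.inf_covBy_of_covBy hd hz hdz)
      (hL.inf_ne_inf_of_covBy hc hd hz hcd hcz) hrz
    exacts [h.1 (h'.trans inf_le_left), h.2 (h'.trans inf_le_left)]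
  · exact not_joinIrred_of_covBy_of_covBy hc hd hcd hr

theorem ell_diff_subsingleton (hL : MeetDistributive L) (hq : q ⋖ p) :
    (ell p \ ell q).Subsingleton := by
  induction p using WellFoundedLT.induction generalizing q with
  | _ p ih =>
  by_cases h : ∃ c, c ⋖ p ∧ c ≠ q
  · obtain ⟨c, hc, hcq⟩ := h
    refine (ih c hc.lt (hL.inf_covBy_of_covBy hq hc hcq.symm)).anti fun r hr => ?_
    have hrq : ¬ r ≤ q := fun h => hr.2 ⟨hr.1.1, h⟩
    have hrc : r ≤ c := (hL.le_or_le_of_joinIrred hc hq hcq hr.1.1 hr.1.2).resolve_right hrq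
    exact ⟨⟨hr.1.1, hrc⟩, fun h => hrq (h.2.trans inf_le_left)⟩
  · push Not at h
    refine (Set.subsingleton_singleton (a := p)).anti fun r hr => ?_
    by_contra hrp
    obtain ⟨z, hrz, hz⟩ := exists_le_covBy_of_lt (lt_of_le_of_ne hr.1.2 hrp)
    exact hr.2 ⟨hr.1.1, h z hz ▸ hrz⟩

end MeetDistributive

/-- If `L` is a meet-distributive meet-semilattice and `q` is a lower neighbor of `p`
(i.e. `p` covers `q`), then `ℓ(p) ∖ ℓ(q)` consists of exactly one element. -/
theorem stmt10 {L : Type*} [Fintype L] [SemilatticeInf L]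
    (hL : MeetDistributive L) {p q : L} (hq : q ⋖ p) :
    ∃ r : L, ell p \ ell q = {r} :=
  Set.exists_eq_singleton_iff_nonempty_subsingleton.2
    ⟨ell_diff_nonempty hq.lt, hL.ell_diff_subsingleton hq⟩
end

section
/- Let L be a finite distributive lattice and let J and K be poset ideals of L. Then H_{J∩K} = H_J ∩ H_K. -/
open MvPolynomial

open Classical in
noncomputable def uExp {L : Type*} [Preorder L] [Fintype L] (q : L) :
    ({p : L // JoinIrred p} ⊕ {p : L // JoinIrred p}) →₀ ℕ :=
  ∑ p : {p : L // JoinIrred p},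
    Finsupp.single (if (p : L) ≤ q then Sum.inl p else Sum.inr p) 1

open Classical in
lemma uMon_eq {L : Type*} [Preorder L] [Fintype L] (F : Type*) [Field F] (q : L) :
    uMon F q = monomial (uExp q) (1 : F) := by
  rw [uMon, uExp, monomial_sum_one]
  refine Finset.prod_congr rfl fun p _ => ?_
  split_ifs <;> simp [X]

open Classical in
lemma uExp_apply_inl {L : Type*} [Preorder L] [Fintype L] (q : L)
    (p : {p : L // JoinIrred p}) :
    uExp q (Sum.inl p) = if (p : L) ≤ q then 1 else 0 := by
  classical
  rw [uExp, Finset.sum_apply']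
  rw [Finset.sum_eq_single p]
  · split_ifs <;> simp [Finsupp.single_apply]
  · intro b _ hb
    split_ifs <;> simp_all [Finsupp.single_apply]
  · simp

open Classical in
lemma uExp_apply_inr {L : Type*} [Preorder L] [Fintype L] (q : L)
    (p : {p : L // JoinIrred p}) :
    uExp q (Sum.inr p) = if (p : L) ≤ q then 0 else 1 := by
  classical
  rw [uExp, Finset.sum_apply']
  rw [Finset.sum_eq_single p]
  · split_ifs <;> simp [Finsupp.single_apply]
  · intro b _ hb
    split_ifs <;> simp_all [Finsupp.single_apply]
  · simp

/-- First claim in the proof of Lemma 4.1: if `L` is a finite distributive lattice and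
`J, K` are poset ideals (lower sets) of `L`, then `H_{J∩K} = H_J ∩ H_K`. -/
theorem stmt13 {L : Type*} [Fintype L] [DistribLattice L] (F : Type*) [Field F]
    (J K : Set L) (hJ : IsLowerSet J) (hK : IsLowerSet K) :
    Ideal.span (uMon F '' (J ∩ K)) =
      Ideal.span (uMon F '' J) ⊓ Ideal.span (uMon F '' K) := by
  classical
  have himg : ∀ M : Set L, uMon F '' M = (fun s => monomial s (1 : F)) '' (uExp '' M) := by
    intro M
    rw [Set.image_image]
    exact Set.image_congr fun q _ => uMon_eq F q
  apply le_antisymm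
  · exact le_inf
      (Ideal.span_mono (Set.image_mono Set.inter_subset_left))
      (Ideal.span_mono (Set.image_mono Set.inter_subset_right))
  · intro f hf
    rw [Ideal.mem_inf, himg J, himg K] at hf
    rw [himg (J ∩ K)]
    obtain ⟨h1, h2⟩ := hf
    rw [mem_ideal_span_monomial_image] at h1 h2
    rw [mem_ideal_span_monomial_image]
    intro xi hxi
    obtain ⟨s1, hs1, hle1⟩ := h1 xi hxi
    obtain ⟨s2, hs2, hle2⟩ := h2 xi hxi
    obtain ⟨q, hq, rfl⟩ := hs1
    obtain ⟨r, hr, rfl⟩ := hs2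
    refine ⟨uExp (q ⊓ r), ⟨q ⊓ r, ⟨hJ inf_le_left hq, hK inf_le_right hr⟩, rfl⟩, ?_⟩
    intro i
    rcases i with p | p
    · rw [uExp_apply_inl]
      split_ifs with h
      · have : uExp q (Sum.inl p) = 1 := by
          rw [uExp_apply_inl, if_pos (le_trans h inf_le_left)]
        exact this ▸ hle1 (Sum.inl p)
      · simp
    · rw [uExp_apply_inr]
      split_ifs with h
      · simp
      · rw [le_inf_iff, not_and_or] at h
        rcases h with h | h
        · have : uExp q (Sum.inr p) = 1 := by rw [uExp_apply_inr, if_neg h]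
          exact this ▸ hle1 (Sum.inr p)
        · have : uExp r (Sum.inr p) = 1 := by rw [uExp_apply_inr, if_neg h]
          exact this ▸ hle2 (Sum.inr p)
end

section
/- Let Δ be a simplicial complex on the vertex set V = {v_1, …, v_n}, let W = {w_1, …, w_n} be a vertex set disjoint from V, and let Γ be the simplicial complex on V ∪ W whose facets are the facets of Δ together with the edges {v_i, w_i} for i = 1, …, n. Let Σ be the simplicial complex on V ∪ W whose faces are exactly the subsets F ⊆ V ∪ W that contain no facet of Γ (so the Stanley–Reisner ideal of Σ equals the facet ideal I(Γ)). Then Σ is pure: every facet of Σ has cardinality n. -/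
/-!
A facet `F` of `Σ` contains no edge `{vᵢ, wᵢ}`, so it meets each pair `{vᵢ, wᵢ}` at most once.
It also meets each pair: if it missed `{vᵢ, wᵢ}`, then `F ∪ {wᵢ}` would still contain no facet
of `Γ`, because every facet of `Γ` containing `wᵢ` also contains `vᵢ`. So `F` picks exactly one
vertex from each of the `n` pairs.
-/

/-- `F` is a facet (maximal face) of the simplicial complex `Δ`. -/
def IsFacet {α : Type*} (Δ : Set (Finset α)) (F : Finset α) : Prop :=
  F ∈ Δ ∧ ∀ G ∈ Δ, F ⊆ G → F = G

open Finset Sum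

lemma Finset.card_eq_of_forall_inl_mem_iff_inr_notMem {ι : Type*} [Fintype ι]
    {F : Finset (ι ⊕ ι)} (hF : ∀ i, inl i ∈ F ↔ inr i ∉ F) : #F = Fintype.card ι := by
  classical
  have hcompl : F.toRightᶜ = F.toLeft := by
    ext i
    simp [hF]
  rw [← card_toLeft_add_card_toRight, ← hcompl, add_comm, card_add_card_compl]

section MaximalAvoiding

variable {ι : Type*} {𝓖 : Set (Finset (ι ⊕ ι))} {F : Finset (ι ⊕ ι)}

lemma inl_mem_or_inr_mem_of_maximal_avoiding [DecidableEq ι]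
    (h𝓖 : ∀ G ∈ 𝓖, ∀ i, inr i ∈ G → inl i ∈ G)
    (hF : ∀ G ∈ 𝓖, ¬ G ⊆ F) (hmax : ∀ G, (∀ E ∈ 𝓖, ¬ E ⊆ G) → F ⊆ G → F = G) (i : ι) :
    inl i ∈ F ∨ inr i ∈ F := by
  by_contra! ⟨hl, hr⟩
  have havoid : ∀ G ∈ 𝓖, ¬ G ⊆ insert (inr i) F := by
    intro G hG hGF
    by_cases hrG : inr i ∈ G
    · exact (mem_insert.1 (hGF (h𝓖 G hG i hrG))).elim (by simp) hl
    · exact hF G hG fun x hx => (mem_insert.1 (hGF hx)).resolve_left (by rintro rfl; exact hrG hx)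
  exact hr (hmax _ havoid (subset_insert _ _) ▸ mem_insert_self _ _)

lemma not_inl_mem_and_inr_mem_of_avoiding [DecidableEq ι] {i : ι}
    (hedge : {inl i, inr i} ∈ 𝓖) (hF : ∀ G ∈ 𝓖, ¬ G ⊆ F) :
    ¬ (inl i ∈ F ∧ inr i ∈ F) := fun ⟨hl, hr⟩ =>
  hF _ hedge (insert_subset hl (singleton_subset_iff.2 hr))

end MaximalAvoiding

theorem stmt17_general {n : ℕ} (Δ : Set (Finset (Fin n)))
    (ΓFacets : Set (Finset (Fin n ⊕ Fin n)))
    (hΓ : ΓFacets = {G | ∃ F : Finset (Fin n), IsFacet Δ F ∧ G = F.image Sum.inl} ∪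
      {G | ∃ i : Fin n, G = {Sum.inl i, Sum.inr i}})
    (Sface : Finset (Fin n ⊕ Fin n) → Prop)
    (hS : ∀ F, Sface F ↔ ∀ G ∈ ΓFacets, ¬ G ⊆ F) :
    ∀ F, Sface F → (∀ G, Sface G → F ⊆ G → F = G) → F.card = n := by
  intro F hF hmax
  have hedge (i : Fin n) : {inl i, inr i} ∈ ΓFacets := hΓ ▸ Or.inr ⟨i, rfl⟩
  have hclosed : ∀ G ∈ ΓFacets, ∀ i, inr i ∈ G → inl i ∈ G := by
    subst hΓ
    rintro G (⟨E, -, rfl⟩ | ⟨j, rfl⟩) i hi <;> simp_all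
  have hF' := (hS F).1 hF
  have hmax' : ∀ G, (∀ E ∈ ΓFacets, ¬ E ⊆ G) → F ⊆ G → F = G := fun G hG => hmax G ((hS G).2 hG)
  have hpick (i : Fin n) : inl i ∈ F ↔ inr i ∉ F :=
    ⟨fun hl hr => not_inl_mem_and_inr_mem_of_avoiding (hedge i) hF' ⟨hl, hr⟩,
      (inl_mem_or_inr_mem_of_maximal_avoiding hclosed hF' hmax' i).resolve_right⟩
  simpa using card_eq_of_forall_inl_mem_iff_inr_notMem hpick

/-- Purity of the grafted complex (key step of Corollary 4.4).  Let `Δ` be a simplicial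
complex on `V = {v_1, …, v_n}` (here `V` is `Fin n` embedded via `Sum.inl`), `W = {w_1, …,
w_n}` a disjoint vertex set (`Fin n` via `Sum.inr`), and `Γ` the complex on `V ∪ W` whose
facets are the facets of `Δ` together with the edges `{v_i, w_i}`.  Let `Σ` be the complex
on `V ∪ W` whose faces are exactly the subsets containing no facet of `Γ` (so the
Stanley–Reisner ideal of `Σ` is the facet ideal `I(Γ)`).  Then `Σ` is pure: every facet of
`Σ` has cardinality `n`. -/
theorem stmt17 {n : ℕ} (Δ : Set (Finset (Fin n)))
    (hΔ : ∀ F ∈ Δ, ∀ G ⊆ F, G ∈ Δ)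
    (ΓFacets : Set (Finset (Fin n ⊕ Fin n)))
    (hΓ : ΓFacets = {G | ∃ F : Finset (Fin n), IsFacet Δ F ∧ G = F.image Sum.inl} ∪
      {G | ∃ i : Fin n, G = {Sum.inl i, Sum.inr i}})
    (Sface : Finset (Fin n ⊕ Fin n) → Prop)
    (hS : ∀ F, Sface F ↔ ∀ G ∈ ΓFacets, ¬ G ⊆ F) :
    ∀ F, Sface F → (∀ G, Sface G → F ⊆ G → F = G) → F.card = n :=
  stmt17_general Δ ΓFacets hΓ Sface hS
end

section
/- Let P be a finite poset with elements p_1, …, p_n and let L = J(P) be the distributive lattice of poset ideals of P. Let V = {v_1, …, v_n} and V' = {w_1, …, w_n} be disjoint vertex sets and let G be the bipartite graph on V ∪ V' with edges {v_i, w_j} for all pairs with p_i ≤ p_j in P. Let Δ be a simplicial complex on V ∪ V' such that (1) no facet of Δ is contained in V, and (2) the facets of Δ that meet both V and V' are exactly the edges of G. Let Γ be the simplicial complex on V ∪ V' whose faces are exactly the subsets F ⊆ V ∪ V' that contain no facet of Δ (so the Stanley–Reisner ideal of Γ equals the facet ideal I(Δ)). Then Γ is pure (all facets of Γ have the same cardinality)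 if and only if there exists a poset ideal I of L containing every join-irreducible element of L (i.e., containing every principal poset ideal of P) such that (H_I)* = I(Δ), where the variables are identified via x_{p_i} = v_i and y_{p_i} = w_i. -/
open MvPolynomial

open Classical in
/-- For a poset ideal (lower set) `s` of `P`, the squarefree monomial
`u_s = (∏_{p ∈ s} x_p)(∏_{p ∈ P∖s} y_p)`, where `x_p = X (Sum.inl p)` identifies `v_p`
and `y_p = X (Sum.inr p)` identifies `w_p`. -/
noncomputable def uSet {P : Type*} [Fintype P] (F : Type*) [Field F] (s : Set P) :
    MvPolynomial (P ⊕ P) F :=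
  ∏ p : P, if p ∈ s then X (Sum.inl p) else X (Sum.inr p)

open Classical in
/-- The *Alexander dual* of a squarefree monomial ideal `I`: the ideal generated by all
squarefree monomials whose support meets the support of every squarefree monomial in `I`
(equivalently, of every minimal monomial generator of `I`). -/
noncomputable def dualIdeal {σ F : Type*} [Field F] (I : Ideal (MvPolynomial σ F)) :
    Ideal (MvPolynomial σ F) :=
  Ideal.span {m | ∃ T : Finset σ, m = ∏ s ∈ T, X s ∧
    ∀ T' : Finset σ, (∏ s ∈ T', X s : MvPolynomial σ F) ∈ I → (T ∩ T').Nonempty}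

/-! ### Auxiliary lemmas -/

namespace Stmt18Aux

open Finset

/-! #### Monomial algebra -/

lemma sum_single_apply {σ : Type*} [DecidableEq σ] (T : Finset σ) (a : σ) :
    (∑ s ∈ T, Finsupp.single s (1:ℕ)) a = if a ∈ T then 1 else 0 := by
  rw [Finset.sum_apply']
  simp [Finsupp.single_apply, Finset.sum_ite_eq' T a (fun _ => 1)]

lemma sum_single_le_iff {σ : Type*} [DecidableEq σ] (T' T : Finset σ) :
    (∑ s ∈ T', Finsupp.single s (1:ℕ)) ≤ ∑ s ∈ T, Finsupp.single s 1 ↔ T' ⊆ T := by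
  constructor
  · intro h a ha
    have := h a
    rw [sum_single_apply, sum_single_apply, if_pos ha] at this
    by_contra hb
    rw [if_neg hb] at this; omega
  · intro h a
    rw [sum_single_apply, sum_single_apply]
    split_ifs with h1 h2
    · exact le_refl _
    · exact absurd (h h1) h2
    · omega
    · exact le_refl _

lemma prodX_eq_monomial {σ F : Type*} [Field F] (T : Finset σ) :
    (∏ s ∈ T, X s : MvPolynomial σ F) = monomial (∑ s ∈ T, Finsupp.single s 1) 1 := by
  classical
  induction T using Finset.cons_induction with
  | empty => simp
  | cons a T ha ih =>
    rw [Finset.prod_cons, Finset.sum_cons, ih, X, monomial_mul, one_mul]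

lemma prodX_mem_span_iff {σ F : Type*} [Field F] (S : Set (Finset σ)) (T : Finset σ) :
    (∏ s ∈ T, X s : MvPolynomial σ F) ∈
        Ideal.span ((fun T' => ∏ s ∈ T', X s) '' S) ↔ ∃ T' ∈ S, T' ⊆ T := by
  classical
  have himg : ((fun T' => ∏ s ∈ T', X s) '' S : Set (MvPolynomial σ F)) =
      (fun d => monomial d (1:F)) ''
        ((fun T' : Finset σ => ∑ s ∈ T', Finsupp.single s 1) '' S) := by
    rw [Set.image_image]
    exact Set.image_congr fun T' _ => prodX_eq_monomial T'
  rw [himg, mem_ideal_span_monomial_image, prodX_eq_monomial, support_monomial]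
  simp only [if_neg (one_ne_zero : (1:F) ≠ 0), Finset.mem_singleton]
  constructor
  · intro h
    obtain ⟨si, ⟨T', hT', rfl⟩, hle⟩ := h _ rfl
    exact ⟨T', hT', (sum_single_le_iff T' T).mp hle⟩
  · rintro ⟨T', hT', hsub⟩ xi rfl
    exact ⟨_, ⟨T', hT', rfl⟩, (sum_single_le_iff T' T).mpr hsub⟩

/-! #### The finset `S(q)` and `uSet` -/

open Classical in
noncomputable def SFin {P : Type*} [Fintype P] (q : Set P) : Finset (P ⊕ P) :=
  (Finset.univ.filter (· ∈ q)).image Sum.inl ∪ (Finset.univ.filter (· ∉ q)).image Sum.inr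

lemma mem_SFin_inl {P : Type*} [Fintype P] {q : Set P} {i : P} :
    Sum.inl i ∈ SFin q ↔ i ∈ q := by
  simp [SFin]

lemma mem_SFin_inr {P : Type*} [Fintype P] {q : Set P} {j : P} :
    Sum.inr j ∈ SFin q ↔ j ∉ q := by
  simp [SFin]

lemma mem_SFin_compl {P : Type*} [Fintype P] {q : Set P} {x : P ⊕ P} :
    x ∈ SFin qᶜ ↔ x ∉ SFin q := by
  cases x <;> simp [mem_SFin_inl, mem_SFin_inr]

lemma card_SFin {P : Type*} [Fintype P] (q : Set P) : (SFin q).card = Fintype.card P := by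
  classical
  rw [SFin, Finset.card_union_of_disjoint, Finset.card_image_of_injective _ Sum.inl_injective,
    Finset.card_image_of_injective _ Sum.inr_injective]
  · rw [Finset.card_filter_add_card_filter_not]; rfl
  · simp [Finset.disjoint_left]

lemma uSet_eq {P : Type*} [Fintype P] (F : Type*) [Field F] (q : Set P) :
    uSet F q = ∏ v ∈ SFin q, X v := by
  classical
  rw [uSet]
  have hinj : Set.InjOn (fun p => if p ∈ q then (Sum.inl p : P ⊕ P) else Sum.inr p)
      ↑(Finset.univ : Finset P) := by
    intro a _ b _ hab
    by_cases ha : a ∈ q <;> by_cases hb : b ∈ q <;>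
      simp [ha, hb] at hab <;> tauto
  have himg : Finset.univ.image (fun p => if p ∈ q then (Sum.inl p : P ⊕ P) else Sum.inr p)
      = SFin q := by
    ext x
    cases x with
    | inl i =>
      simp only [Finset.mem_image, Finset.mem_univ, true_and, mem_SFin_inl]
      constructor
      · rintro ⟨p, hp⟩
        by_cases h : p ∈ q <;> simp [h] at hp <;> subst hp <;> tauto
      · intro h; exact ⟨i, by simp [h]⟩
    | inr j =>
      simp only [Finset.mem_image, Finset.mem_univ, true_and, mem_SFin_inr]
      constructor
      · rintro ⟨p, hp⟩
        by_cases h : p ∈ q <;> simp [h] at hp <;> subst hp <;> tauto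
      · intro h; exact ⟨j, by simp [h]⟩
  rw [← himg, Finset.prod_image (fun a ha b hb h => hinj (by simp) (by simp) h)]
  apply Finset.prod_congr rfl
  intro p _
  by_cases h : p ∈ q <;> simp [h]

/-! #### Combinatorics of facet-free sets -/

section Comb

variable {P : Type*} [Fintype P] [PartialOrder P] [DecidableEq P] {Δ : Set (Finset (P ⊕ P))}

/-- `G` contains no facet of `Δ`. -/
def FreeF (Δ : Set (Finset (P ⊕ P))) (G : Finset (P ⊕ P)) : Prop :=
  ∀ E, IsFacet Δ E → ¬ E ⊆ G

variable (h1 : ∀ G : Finset (P ⊕ P), IsFacet Δ G → ∃ x ∈ G, x.isRight)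
variable (h2 : ∀ G : Finset (P ⊕ P),
      (IsFacet Δ G ∧ (∃ x ∈ G, x.isLeft) ∧ (∃ x ∈ G, x.isRight)) ↔
        (∃ i j : P, i ≤ j ∧ G = {Sum.inl i, Sum.inr j}))

include h2 in
lemma edge_facet {i j : P} (hij : i ≤ j) :
    IsFacet Δ {Sum.inl i, Sum.inr j} :=
  (((h2 _).mpr ⟨i, j, hij, rfl⟩)).1

include h1 h2 in
lemma facet_cases {E : Finset (P ⊕ P)} (hE : IsFacet Δ E) :
    (∃ i j : P, i ≤ j ∧ E = {Sum.inl i, Sum.inr j}) ∨ ∀ x ∈ E, x.isRight := by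
  by_cases hl : ∃ x ∈ E, x.isLeft
  · exact Or.inl ((h2 E).mp ⟨hE, hl, h1 E hE⟩)
  · right
    intro x hx
    cases x with
    | inl i => exact absurd ⟨Sum.inl i, hx, rfl⟩ hl
    | inr j => rfl

lemma exists_max_free {G : Finset (P ⊕ P)} (hfree : FreeF Δ G) :
    ∃ G', G ⊆ G' ∧ FreeF Δ G' ∧ ∀ G'', FreeF Δ G'' → G' ⊆ G'' → G' = G'' := by
  classical
  let s : Finset (Finset (P ⊕ P)) := Finset.univ.filter (fun H => FreeF Δ H ∧ G ⊆ H)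
  have hGs : G ∈ s := by simp [s, hfree]
  obtain ⟨m, hm, hmax⟩ := s.exists_maximal ⟨G, hGs⟩
  simp only [s, Finset.mem_filter, Finset.mem_univ, true_and] at hm
  refine ⟨m, hm.2, hm.1, ?_⟩
  intro G'' hfree'' hsub
  by_contra hne'
  have hlt : m ⊂ G'' := ⟨hsub, fun h => hne' (Finset.Subset.antisymm hsub h)⟩
  exact hlt.2 (hmax (by simp [s, hfree'', hm.2.trans hsub]) hlt.1)

include h2 in
lemma free_card_struct {G : Finset (P ⊕ P)} (hfree : FreeF Δ G)
    (hcard : G.card = Fintype.card P) :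
    ∃ B : Set P, IsLowerSet B ∧ G = SFin Bᶜ := by
  classical
  set A : Finset P := Finset.univ.filter (fun i => Sum.inl i ∈ G) with hA
  set B : Finset P := Finset.univ.filter (fun j => Sum.inr j ∈ G) with hB
  set D : Finset P := Finset.univ.filter (fun i => ∃ j ∈ B, i ≤ j) with hD
  have hG : G = A.image Sum.inl ∪ B.image Sum.inr := by
    ext x
    cases x with
    | inl i => simp [hA]
    | inr j => simp [hB]
  have hcard2 : A.card + B.card = Fintype.card P := by
    rw [← hcard, hG, Finset.card_union_of_disjoint (by simp [Finset.disjoint_left]),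
      Finset.card_image_of_injective _ Sum.inl_injective,
      Finset.card_image_of_injective _ Sum.inr_injective]
  have hAD : Disjoint A D := by
    rw [Finset.disjoint_left]
    intro i hiA hiD
    rw [hD, Finset.mem_filter] at hiD
    obtain ⟨-, j, hjB, hij⟩ := hiD
    rw [hB, Finset.mem_filter] at hjB
    rw [hA, Finset.mem_filter] at hiA
    refine hfree _ (edge_facet h2 hij) ?_
    exact Finset.insert_subset_iff.mpr ⟨hiA.2, Finset.singleton_subset_iff.mpr hjB.2⟩
  have hBD : B ⊆ D := by
    intro j hj
    rw [hD, Finset.mem_filter]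
    exact ⟨Finset.mem_univ _, j, hj, le_refl j⟩
  have hDcard : A.card + D.card ≤ Fintype.card P := by
    rw [← Finset.card_union_of_disjoint hAD, ← Finset.card_univ]
    exact Finset.card_le_card (Finset.subset_univ _)
  have hBDeq : B = D :=
    Finset.eq_of_subset_of_card_le hBD (by have := Finset.card_le_card hBD; omega)
  have hlow : IsLowerSet {j | j ∈ B} := by
    intro a b hab ha
    have : b ∈ D := by
      rw [hD, Finset.mem_filter]
      exact ⟨Finset.mem_univ _, a, ha, hab⟩
    rwa [← hBDeq] at this
  have hAeq : A = Finset.univ \ B := by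
    apply Finset.eq_of_subset_of_card_le
    · intro i hi
      rw [Finset.mem_sdiff]
      exact ⟨Finset.mem_univ _, fun hiB => (Finset.disjoint_left.mp hAD) hi (hBD hiB)⟩
    · rw [Finset.card_sdiff_of_subset (Finset.subset_univ _), Finset.card_univ]
      omega
  refine ⟨{j | j ∈ B}, hlow, ?_⟩
  rw [hG]
  ext x
  cases x with
  | inl i =>
    simp only [Finset.mem_union, Finset.mem_image, mem_SFin_inl, Set.mem_compl_iff,
      Set.mem_setOf_eq]
    constructor
    · rintro (⟨p, hp, h⟩ | ⟨p, hp, h⟩)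
      · cases h
        rw [hAeq, Finset.mem_sdiff] at hp
        exact hp.2
      · cases h
    · intro h
      left
      refine ⟨i, ?_, rfl⟩
      rw [hAeq, Finset.mem_sdiff]
      exact ⟨Finset.mem_univ _, h⟩
  | inr j =>
    simp only [Finset.mem_union, Finset.mem_image, mem_SFin_inr, Set.mem_compl_iff,
      Set.mem_setOf_eq, not_not]
    constructor
    · rintro (⟨p, hp, h⟩ | ⟨p, hp, h⟩)
      · cases h
      · cases h; exact hp
    · intro h
      exact Or.inr ⟨j, h, rfl⟩

include h1 in
lemma free_inl_univ : FreeF Δ (Finset.univ.image Sum.inl) := by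
  intro E hE hsub
  obtain ⟨x, hx, hr⟩ := h1 E hE
  obtain ⟨p, -, rfl⟩ := Finset.mem_image.mp (hsub hx)
  simp at hr

include h2 in
lemma max_inl_univ : ∀ G'', FreeF Δ G'' → Finset.univ.image Sum.inl ⊆ G'' →
    Finset.univ.image Sum.inl = G'' := by
  intro G'' hf hsub
  refine Finset.Subset.antisymm hsub ?_
  intro x hx
  cases x with
  | inl i => exact Finset.mem_image.mpr ⟨i, Finset.mem_univ _, rfl⟩
  | inr j =>
    exfalso
    refine hf _ (edge_facet h2 (le_refl j)) ?_
    exact Finset.insert_subset_iff.mpr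
      ⟨hsub (Finset.mem_image.mpr ⟨j, Finset.mem_univ _, rfl⟩),
        Finset.singleton_subset_iff.mpr hx⟩

lemma card_inl_univ : (Finset.univ.image (Sum.inl : P → P ⊕ P)).card = Fintype.card P := by
  rw [Finset.card_image_of_injective _ Sum.inl_injective, Finset.card_univ]

include h1 h2 in
lemma singleton_inr_free (p : P) : FreeF Δ {Sum.inr p} := by
  intro E hE hsub
  have hsub2 : E ⊆ {Sum.inl p, Sum.inr p} := by
    refine hsub.trans ?_
    intro x hx
    rw [Finset.mem_singleton] at hx
    simp [hx]
  have hedge := edge_facet h2 (le_refl p)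
  have hEeq : E = {Sum.inl p, Sum.inr p} := hE.2 _ hedge.1 hsub2
  have hmem : Sum.inl p ∈ E := by rw [hEeq]; simp
  have := hsub hmem
  simp at this

include h1 h2 in
lemma principal_free
    (hpure : ∀ G : Finset (P ⊕ P), FreeF Δ G →
      (∀ G'', FreeF Δ G'' → G ⊆ G'' → G = G'') → G.card = Fintype.card P)
    (p : P) : ∀ E, IsFacet Δ E → ¬ E ⊆ SFin ({t : P | t ≤ p}ᶜ) := by
  intro E hE hsub
  rcases facet_cases h1 h2 hE with ⟨i, j, hij, rfl⟩ | hr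
  · have hi := hsub (show Sum.inl i ∈ _ by simp)
    have hj := hsub (show Sum.inr j ∈ _ by simp [Finset.mem_insert])
    rw [mem_SFin_inl] at hi
    rw [mem_SFin_inr] at hj
    simp only [Set.mem_compl_iff, Set.mem_setOf_eq, not_not] at hi hj
    exact hi (hij.trans hj)
  · obtain ⟨G, hsub0, hfree, hmax⟩ := exists_max_free (singleton_inr_free h1 h2 p)
    have hcard := hpure G hfree hmax
    obtain ⟨B, hlow, rfl⟩ := free_card_struct h2 hfree hcard
    have hp : p ∈ B := by
      have := hsub0 (Finset.mem_singleton_self _)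
      rw [mem_SFin_inr] at this
      simpa using this
    refine hfree E hE ?_
    intro x hx
    obtain ⟨j, rfl⟩ := Sum.isRight_iff.mp (hr x hx)
    have hj := hsub hx
    rw [mem_SFin_inr] at hj
    simp only [Set.mem_compl_iff, Set.mem_setOf_eq, not_not] at hj
    rw [mem_SFin_inr]
    simp only [Set.mem_compl_iff, not_not]
    exact hlow hj hp

end Comb

/-! #### Translation of the ideal equality -/

lemma ideal_eq_iff {P : Type*} [Fintype P] [PartialOrder P] [DecidableEq P] (F : Type*) [Field F]
    (Δ : Set (Finset (P ⊕ P))) (I : Set (Set P)) :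
    (dualIdeal (Ideal.span (uSet F '' I)) =
        Ideal.span {m | ∃ G : Finset (P ⊕ P), IsFacet Δ G ∧ m = ∏ v ∈ G, X v}) ↔
      ((∀ T : Finset (P ⊕ P), (∀ q ∈ I, (T ∩ SFin q).Nonempty) →
          ∃ G, IsFacet Δ G ∧ G ⊆ T) ∧
        (∀ G, IsFacet Δ G → ∀ q ∈ I, (G ∩ SFin q).Nonempty)) := by
  classical
  have hu : (uSet F '' I : Set (MvPolynomial (P ⊕ P) F)) =
      (fun T => ∏ s ∈ T, X s) '' (SFin '' I) := by
    rw [Set.image_image]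
    exact Set.image_congr fun q _ => uSet_eq F q
  have hmem : ∀ T' : Finset (P ⊕ P),
      ((∏ s ∈ T', X s : MvPolynomial (P ⊕ P) F) ∈ Ideal.span (uSet F '' I) ↔
        ∃ q ∈ I, SFin q ⊆ T') := by
    intro T'
    rw [hu, prodX_mem_span_iff]
    constructor
    · rintro ⟨S', ⟨q, hq, rfl⟩, h⟩
      exact ⟨q, hq, h⟩
    · rintro ⟨q, hq, h⟩
      exact ⟨SFin q, ⟨q, hq, rfl⟩, h⟩
  have hconv : ∀ (i : DecidableEq (P ⊕ P)) (T T' : Finset (P ⊕ P)),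
      (@Inter.inter _ (@Finset.instInter _ i) T T').Nonempty ↔ ∃ x, x ∈ T ∧ x ∈ T' := by
    intro i T T'
    constructor
    · rintro ⟨x, hx⟩
      exact ⟨x, (@Finset.mem_inter _ i _ _ _).mp hx⟩
    · rintro ⟨x, hx1, hx2⟩
      exact ⟨x, (@Finset.mem_inter _ i _ _ _).mpr ⟨hx1, hx2⟩⟩
  have hdual : dualIdeal (Ideal.span (uSet F '' I)) =
      Ideal.span ((fun T => ∏ s ∈ T, X s) ''
        {T : Finset (P ⊕ P) | ∀ q ∈ I, (T ∩ SFin q).Nonempty}) := by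
    rw [dualIdeal]
    congr 1
    ext m
    simp only [Set.mem_setOf_eq, Set.mem_image]
    constructor
    · rintro ⟨T, rfl, hT⟩
      refine ⟨T, ?_, rfl⟩
      intro q hq
      exact (hconv _ _ _).mpr ((hconv _ _ _).mp
        (hT (SFin q) ((hmem _).mpr ⟨q, hq, subset_rfl⟩)))
    · rintro ⟨T, hT, rfl⟩
      refine ⟨T, rfl, ?_⟩
      intro T' hT'
      obtain ⟨q, hq, hsub⟩ := (hmem T').mp hT'
      obtain ⟨x, hx1, hx2⟩ := (hconv _ _ _).mp (hT q hq)
      exact (hconv _ _ _).mpr ⟨x, hx1, hsub hx2⟩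
  have hfacet : {m : MvPolynomial (P ⊕ P) F | ∃ G, IsFacet Δ G ∧ m = ∏ v ∈ G, X v} =
      (fun T => ∏ s ∈ T, X s) '' {G | IsFacet Δ G} := by
    ext m
    simp only [Set.mem_setOf_eq, Set.mem_image]
    constructor
    · rintro ⟨G, h, rfl⟩
      exact ⟨G, h, rfl⟩
    · rintro ⟨G, h, rfl⟩
      exact ⟨G, h, rfl⟩
  rw [hdual, hfacet]
  constructor
  · intro h
    constructor
    · intro T hT
      have hmem2 : (∏ s ∈ T, X s : MvPolynomial (P ⊕ P) F) ∈
          Ideal.span ((fun T => ∏ s ∈ T, X s) '' {G | IsFacet Δ G}) := by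
        rw [← h]
        exact Ideal.subset_span ⟨T, hT, rfl⟩
      obtain ⟨G, hG, hsub⟩ := (prodX_mem_span_iff _ _).mp hmem2
      exact ⟨G, hG, hsub⟩
    · intro G hG q hq
      have hmem2 : (∏ s ∈ G, X s : MvPolynomial (P ⊕ P) F) ∈
          Ideal.span ((fun T => ∏ s ∈ T, X s) ''
            {T : Finset (P ⊕ P) | ∀ q ∈ I, (T ∩ SFin q).Nonempty}) := by
        rw [h]
        exact Ideal.subset_span ⟨G, hG, rfl⟩
      obtain ⟨T, hT, hsub⟩ := (prodX_mem_span_iff _ _).mp hmem2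
      obtain ⟨x, hx⟩ := hT q hq
      rw [Finset.mem_inter] at hx
      exact ⟨x, Finset.mem_inter.mpr ⟨hsub hx.1, hx.2⟩⟩
  · rintro ⟨ha, hb⟩
    apply le_antisymm
    · rw [Ideal.span_le]
      rintro m ⟨T, hT, rfl⟩
      obtain ⟨G, hG, hsub⟩ := ha T hT
      exact (prodX_mem_span_iff _ _).mpr ⟨G, hG, hsub⟩
    · rw [Ideal.span_le]
      rintro m ⟨G, hG, rfl⟩
      exact (prodX_mem_span_iff _ _).mpr ⟨G, fun q hq => hb G hG q hq, subset_rfl⟩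

end Stmt18Aux

open Stmt18Aux in
/-- Theorem 4.3 (b) ⇔ (c).  Let `P` be a finite poset, `V = {v_p} = P` via `Sum.inl` and
`V' = {w_p} = P` via `Sum.inr`, and let `G` be the bipartite graph on `V ∪ V'` with edges
`{v_i, w_j}` for `p_i ≤ p_j`.  Let `Δ` be a simplicial complex on `V ∪ V'` such that
(1) no facet of `Δ` is contained in `V`, and (2) the facets of `Δ` meeting both `V` and
`V'` are exactly the edges of `G`.  Let `Γ` be the complex whose faces are exactly the
subsets containing no facet of `Δ` (so `I_Γ = I(Δ)`).  Then `Γ` is pure if and only if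
there is a poset ideal `I` of the distributive lattice `J(P)` of lower sets of `P`,
containing all principal lower sets (the join-irreducible elements of `J(P)`), such that
`(H_I)* = I(Δ)`. -/
theorem stmt18 {P : Type*} [Fintype P] [PartialOrder P] [DecidableEq P] (F : Type*) [Field F]
    (Δ : Set (Finset (P ⊕ P)))
    (hΔ : ∀ G ∈ Δ, ∀ G' ⊆ G, G' ∈ Δ)
    (h1 : ∀ G : Finset (P ⊕ P), IsFacet Δ G → ∃ x ∈ G, x.isRight)
    (h2 : ∀ G : Finset (P ⊕ P),
      (IsFacet Δ G ∧ (∃ x ∈ G, x.isLeft) ∧ (∃ x ∈ G, x.isRight)) ↔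
        (∃ i j : P, i ≤ j ∧ G = {Sum.inl i, Sum.inr j})) :
    (∀ G G' : Finset (P ⊕ P),
        ((∀ E, IsFacet Δ E → ¬ E ⊆ G) ∧
          ∀ G'', (∀ E, IsFacet Δ E → ¬ E ⊆ G'') → G ⊆ G'' → G = G'') →
        ((∀ E, IsFacet Δ E → ¬ E ⊆ G') ∧
          ∀ G'', (∀ E, IsFacet Δ E → ¬ E ⊆ G'') → G' ⊆ G'' → G' = G'') →
        G.card = G'.card) ↔
      (∃ I : Set (Set P),
        (∀ s ∈ I, IsLowerSet s) ∧
        (∀ s ∈ I, ∀ t : Set P, IsLowerSet t → t ⊆ s → t ∈ I) ∧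
        (∀ p : P, {t : P | t ≤ p} ∈ I) ∧
        dualIdeal (Ideal.span (uSet F '' I)) =
          Ideal.span {m | ∃ G : Finset (P ⊕ P), IsFacet Δ G ∧ m = ∏ v ∈ G, X v}) := by
  classical
  constructor
  · intro hpure
    have hpure' : ∀ G : Finset (P ⊕ P), FreeF Δ G →
        (∀ G'', FreeF Δ G'' → G ⊆ G'' → G = G'') → G.card = Fintype.card P := by
      intro G hf hm
      have := hpure G (Finset.univ.image Sum.inl) ⟨hf, hm⟩
        ⟨free_inl_univ h1, max_inl_univ h2⟩
      rw [this, card_inl_univ]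
    refine ⟨{q | IsLowerSet q ∧ ∀ E, IsFacet Δ E → ¬ E ⊆ SFin qᶜ}, fun s hs => hs.1,
      ?_, ?_, ?_⟩
    · rintro s ⟨hs1, hs2⟩ t ht hts
      refine ⟨ht, fun E hE hsub => ?_⟩
      rcases facet_cases h1 h2 hE with ⟨i, j, hij, rfl⟩ | hr
      · have hi := hsub (show Sum.inl i ∈ _ by simp)
        have hj := hsub (show Sum.inr j ∈ _ by simp)
        rw [mem_SFin_inl] at hi
        rw [mem_SFin_inr] at hj
        rw [Set.mem_compl_iff] at hi
        rw [Set.notMem_compl_iff] at hj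
        exact hi (ht hij hj)
      · refine hs2 E hE ?_
        intro x hx
        obtain ⟨j, rfl⟩ := Sum.isRight_iff.mp (hr x hx)
        have hj := hsub hx
        rw [mem_SFin_inr, Set.notMem_compl_iff] at hj
        rw [mem_SFin_inr, Set.notMem_compl_iff]
        exact hts hj
    · intro p
      exact ⟨fun a b hab hb => le_trans hab hb, principal_free h1 h2 hpure' p⟩
    · rw [ideal_eq_iff]
      constructor
      · intro T hT
        by_contra hnone
        push_neg at hnone
        have hfree : FreeF Δ T := fun E hE => hnone E hE
        obtain ⟨G, hsub, hfree', hmax⟩ := exists_max_free hfree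
        obtain ⟨B, hlow, hGeq⟩ := free_card_struct h2 hfree' (hpure' _ hfree' hmax)
        have hBI : B ∈ {q | IsLowerSet q ∧ ∀ E, IsFacet Δ E → ¬ E ⊆ SFin qᶜ} := by
          refine ⟨hlow, ?_⟩
          rw [← hGeq]
          exact hfree'
        obtain ⟨x, hx⟩ := hT B hBI
        rw [Finset.mem_inter] at hx
        have hxG := hsub hx.1
        rw [hGeq, mem_SFin_compl] at hxG
        exact hxG hx.2
      · intro G hG q hq
        by_contra hne
        rw [Finset.not_nonempty_iff_eq_empty] at hne
        refine hq.2 G hG ?_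
        intro x hx
        rw [mem_SFin_compl]
        intro hx2
        have : x ∈ G ∩ SFin q := Finset.mem_inter.mpr ⟨hx, hx2⟩
        rw [hne] at this
        exact absurd this (Finset.notMem_empty x)
  · rintro ⟨I, hIlow, hIdown, hIprin, hIeq⟩
    rw [ideal_eq_iff] at hIeq
    obtain ⟨ha, hb⟩ := hIeq
    have hkey : ∀ G : Finset (P ⊕ P), (∀ E, IsFacet Δ E → ¬ E ⊆ G) →
        (∀ G'', (∀ E, IsFacet Δ E → ¬ E ⊆ G'') → G ⊆ G'' → G = G'') →
        G.card = Fintype.card P := by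
      intro G hf hm
      have htrans : ¬ (∀ q ∈ I, (G ∩ SFin q).Nonempty) := by
        intro h
        obtain ⟨E, hE, hsub⟩ := ha G h
        exact hf E hE hsub
      push_neg at htrans
      obtain ⟨q, hq, hne⟩ := htrans
      have hsub : G ⊆ SFin qᶜ := by
        intro x hx
        rw [mem_SFin_compl]
        intro h2x
        have : x ∈ G ∩ SFin q := Finset.mem_inter.mpr ⟨hx, h2x⟩
        rw [hne] at this
        exact absurd this (Finset.notMem_empty x)
      have hfreeq : ∀ E, IsFacet Δ E → ¬ E ⊆ SFin qᶜ := by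
        intro E hE hEsub
        obtain ⟨x, hx⟩ := hb E hE q hq
        rw [Finset.mem_inter] at hx
        have := hEsub hx.1
        rw [mem_SFin_compl] at this
        exact this hx.2
      rw [hm _ hfreeq hsub, card_SFin]
    intro G G' hG hG'
    rw [hkey G hG.1 hG.2, hkey G' hG'.1 hG'.2]
end
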